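/- arXiv:math/0702286 — 7 statements merged into one kernel-verified Lean document; each statement's English description precedes it below -/
import Mathlib

section
/- Let V be a 2n-dimensional vector space over a field F of characteristic ≠ 2 equipped with a nondegenerate symmetric bilinear form h, and let e ∈ ⋀^{2n}V be the wedge of an orthogonal basis e_1,...,e_{2n}. Define a_e : ⋀^n V → ⋀^n V as the composition of the map ⋀^n b_h : ⋀^n V → ⋀^n V* induced by the isomorphism b_h : V → V* given by h, with the isomorphism ⋀^n V* → ⋀^n V determined by the perfect wedge pairing ⋀^n V × ⋀^n V → ⋀^{2n}V ≅ F (using the basis element e). Then a_e ∘ a_e = D · Id, where D = (-1)^n ∏_{i=1}^{2n} h(e_i, e_i) is the discriminant of h in this basis. -/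
open ExteriorAlgebra

/-- The wedge `v₁ ∧ ⋯ ∧ vₙ`, as an element of the `n`-th exterior power
`⋀[F]^n V ⊆ ExteriorAlgebra F V`. -/
noncomputable def wedgeι (F : Type*) [Field F] (V : Type*) [AddCommGroup V] [Module F V]
    (n : ℕ) (v : Fin n → V) : ⋀[F]^n V :=
  ⟨ExteriorAlgebra.ιMulti F n v, ExteriorAlgebra.ιMulti_range F n (Set.mem_range_self v)⟩

namespace Stmt0Aux

variable {F : Type*} [Field F] {V : Type*} [AddCommGroup V] [Module F V]

lemma ιMulti_fin_cast {m m' : ℕ} (h : m = m') (v : Fin m' → V) :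
    ιMulti F m' v = ιMulti F m (v ∘ Fin.cast h) := by
  subst h; rfl

lemma comp_append {α β : Type*} {m k : ℕ} (g : α → β) (u : Fin m → α) (w : Fin k → α) :
    g ∘ Fin.append u w = Fin.append (g ∘ u) (g ∘ w) := by
  funext j
  refine Fin.addCases (fun i => ?_) (fun i => ?_) j <;>
    simp [Fin.append_left, Fin.append_right]

lemma ιMulti_mul (m k : ℕ) (u : Fin m → V) (w : Fin k → V) :
    ιMulti F m u * ιMulti F k w = ιMulti F (m + k) (Fin.append u w) := by
  rw [ιMulti_apply, ιMulti_apply, ιMulti_apply, ← List.prod_append, ← List.ofFn_fin_append]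
  congr 1
  have : (fun i => ι F (Fin.append u w i)) = Fin.append (fun i => ι F (u i)) (fun i => ι F (w i)) :=
    comp_append (ι F) u w
  rw [this]

lemma ι_mul_ι_swap (x y : V) : ι F x * ι F y = (-1 : F) • (ι F y * ι F x) := by
  have h0 := ι_add_mul_swap (R := F) x y
  rw [neg_one_smul, eq_neg_iff_add_eq_zero, h0]

lemma ι_mul_ιMulti (x : V) (k : ℕ) (w : Fin k → V) :
    ι F x * ιMulti F k w = ((-1 : F) ^ k) • (ιMulti F k w * ι F x) := by
  induction k with
  | zero => simp [ιMulti_zero_apply]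
  | succ k ih =>
    rw [ιMulti_succ_apply, ← mul_assoc, ι_mul_ι_swap x (w 0), smul_mul_assoc, mul_assoc,
      ih (Matrix.vecTail w), mul_smul_comm, smul_smul, pow_succ, mul_comm, mul_assoc]

lemma ιMulti_mul_comm (m k : ℕ) (u : Fin m → V) (w : Fin k → V) :
    ιMulti F m u * ιMulti F k w = ((-1 : F) ^ (m * k)) • (ιMulti F k w * ιMulti F m u) := by
  induction m with
  | zero => simp [ιMulti_zero_apply]
  | succ m ih =>
    rw [ιMulti_succ_apply, mul_assoc, ih, mul_smul_comm, ← mul_assoc,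
      ι_mul_ιMulti (u 0) k w, smul_mul_assoc, smul_smul, ← pow_add, mul_assoc,
      ← ιMulti_succ_apply]
    ring_nf


variable (n : ℕ) (b : Module.Basis (Fin (2 * n)) F V)

/-- Index type: subsets of `Fin (2n)` of cardinality `n`. -/
abbrev NS := {S : Finset (Fin (2 * n)) // S.card = n}

variable {n}

/-- The family of basis vectors indexed by a size-`n` subset, in increasing order. -/
noncomputable def BW (S : NS n) : Fin n → V := fun i => b (S.1.orderEmbOfFin S.2 i)

/-- The corresponding basis wedge in the exterior algebra. -/
noncomputable def Bel (S : NS n) : ExteriorAlgebra F V := ιMulti F n (BW b S)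

/-- The coordinate functional on the top exterior power. -/
noncomputable def phi : ExteriorAlgebra F V →ₗ[F] F :=
  liftAlternating (Function.update (fun _ => 0) (2 * n) b.det)

lemma phi_ιMulti (v : Fin (2 * n) → V) : phi b (ιMulti F (2 * n) v) = b.det v := by
  rw [phi, liftAlternating_apply_ιMulti, Function.update_self]

/-- The complement of a size-`n` subset of `Fin (2n)`. -/
def complNS (S : NS n) : NS n :=
  ⟨S.1ᶜ, by rw [Finset.card_compl, S.2, Fintype.card_fin]; omega⟩

@[simp] lemma complNS_complNS (S : NS n) : complNS (complNS S) = S := by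
  apply Subtype.ext
  simp [complNS]

/-- The function `Fin (2n) → Fin (2n)` enumerating `S` and then `T`. -/
noncomputable def cmb (S T : NS n) : Fin (2 * n) → Fin (2 * n) :=
  fun j => Fin.append (fun i => S.1.orderEmbOfFin S.2 i) (fun i => T.1.orderEmbOfFin T.2 i)
    (Fin.cast (two_mul n) j)

lemma Bel_mul_Bel (S T : NS n) :
    Bel b S * Bel b T = ιMulti F (2 * n) (fun j => b (cmb S T j)) := by
  rw [Bel, Bel, ιMulti_mul, ιMulti_fin_cast (two_mul n)]
  congr 1
  funext j
  show Fin.append (BW b S) (BW b T) (Fin.cast (two_mul n) j) = _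
  rw [cmb]
  have : Fin.append (BW b S) (BW b T) =
      (fun x => b x) ∘ Fin.append (fun i => S.1.orderEmbOfFin S.2 i)
        (fun i => T.1.orderEmbOfFin T.2 i) := by
    rw [comp_append]
    rfl
  rw [this]
  rfl

lemma fin_cases_addCases {m k : ℕ} (u : Fin (m + k)) :
    (∃ i : Fin m, u = Fin.castAdd k i) ∨ ∃ i : Fin k, u = Fin.natAdd m i := by
  rcases Nat.lt_or_ge u.val m with hl | hl
  · exact Or.inl ⟨⟨u.val, hl⟩, by simp [Fin.ext_iff]⟩
  · exact Or.inr ⟨⟨u.val - m, by omega⟩, by simp [Fin.ext_iff]; omega⟩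

lemma append_injective {α : Type*} {m k : ℕ} {f : Fin m → α} {g : Fin k → α}
    (hf : Function.Injective f) (hg : Function.Injective g)
    (hd : ∀ i j, f i ≠ g j) : Function.Injective (Fin.append f g) := by
  intro u v huv
  rcases fin_cases_addCases u with ⟨i, rfl⟩ | ⟨i, rfl⟩ <;>
    rcases fin_cases_addCases v with ⟨j, rfl⟩ | ⟨j, rfl⟩ <;>
      simp only [Fin.append_left, Fin.append_right] at huv
  · rw [hf huv]
  · exact absurd huv (hd i j)
  · exact absurd huv.symm (hd j i)
  · rw [hg huv]

lemma mem_iff_exists_orderEmbOfFin {N k : ℕ} (S : Finset (Fin N)) (hS : S.card = k)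
    (x : Fin N) (hx : x ∈ S) : ∃ i, S.orderEmbOfFin hS i = x := by
  have := S.range_orderEmbOfFin hS
  rw [← Finset.mem_coe, ← this] at hx
  exact hx

lemma cmb_compl_injective (S : NS n) : Function.Injective (cmb S (complNS S)) := by
  have key : Function.Injective (Fin.append (fun i => S.1.orderEmbOfFin S.2 i)
      (fun i => (complNS S).1.orderEmbOfFin (complNS S).2 i)) := by
    apply append_injective (S.1.orderEmbOfFin S.2).injective
      ((complNS S).1.orderEmbOfFin (complNS S).2).injective
    intro i j hij
    have h1 := S.1.orderEmbOfFin_mem S.2 i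
    have h2 := (complNS S).1.orderEmbOfFin_mem (complNS S).2 j
    rw [hij] at h1
    exact (Finset.mem_compl.1 h2) h1
  intro j₁ j₂ hj
  have := key hj
  simpa [Fin.ext_iff] using this

/-- The permutation of `Fin (2n)` enumerating `S` then `Sᶜ`. -/
noncomputable def cmbPerm (S : NS n) : Equiv.Perm (Fin (2 * n)) :=
  Equiv.ofBijective _ (Finite.injective_iff_bijective.1 (cmb_compl_injective S))

lemma cmbPerm_apply (S : NS n) (j) : cmbPerm S j = cmb S (complNS S) j := rfl

/-- The sign of that permutation, as an element of `F`. -/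
noncomputable def eps (S : NS n) : F := ((Equiv.Perm.sign (cmbPerm S) : ℤ) : F)

lemma eps_sq (S : NS n) : (eps S : F) * eps S = 1 := by
  rw [eps, ← Int.cast_mul, ← Units.val_mul, ← pow_two, Int.units_sq, Units.val_one, Int.cast_one]

lemma det_comp_perm (σ : Equiv.Perm (Fin (2 * n))) :
    b.det (⇑b ∘ σ) = ((Equiv.Perm.sign σ : ℤ) : F) := by
  rw [AlternatingMap.map_perm, Module.Basis.det_self]
  rw [Units.smul_def, zsmul_eq_mul, mul_one]

lemma phi_Bel_mul_Bel (S T : NS n) :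
    phi b (Bel b S * Bel b T) = if T = complNS S then (eps S : F) else 0 := by
  rw [Bel_mul_Bel, phi_ιMulti]
  by_cases hT : T = complNS S
  · subst hT
    rw [if_pos rfl, eps, ← det_comp_perm b (cmbPerm S)]
    congr 1
  · rw [if_neg hT]
    -- S and T intersect
    have hST : ¬ Disjoint S.1 T.1 := by
      intro hd
      apply hT
      apply Subtype.ext
      apply Finset.eq_of_subset_of_card_le
      · exact fun x hx => Finset.mem_compl.2 fun hxS => (Finset.disjoint_left.1 hd hxS) hx
      · exact le_of_eq (by rw [(complNS S).2, T.2])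
    rw [Finset.not_disjoint_iff] at hST
    obtain ⟨x, hxS, hxT⟩ := hST
    obtain ⟨i₁, hi₁⟩ := mem_iff_exists_orderEmbOfFin S.1 S.2 x hxS
    obtain ⟨i₂, hi₂⟩ := mem_iff_exists_orderEmbOfFin T.1 T.2 x hxT
    apply b.det.map_eq_zero_of_eq _ (i := Fin.cast (two_mul n).symm (Fin.castAdd n i₁))
      (j := Fin.cast (two_mul n).symm (Fin.natAdd n i₂))
    · show b (cmb S T _) = b (cmb S T _)
      rw [cmb, cmb]
      congr 1
      have e1 : Fin.cast (two_mul n) (Fin.cast (two_mul n).symm (Fin.castAdd n i₁)) =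
          Fin.castAdd n i₁ := by simp [Fin.ext_iff]
      have e2 : Fin.cast (two_mul n) (Fin.cast (two_mul n).symm (Fin.natAdd n i₂)) =
          Fin.natAdd n i₂ := by simp [Fin.ext_iff]
      rw [e1, e2, Fin.append_left, Fin.append_right, hi₁, hi₂]
    · simp [Fin.ext_iff]
      omega


lemma ιMulti_basis_perm (S : NS n) (σ : Equiv.Perm (Fin n)) :
    ιMulti F n (BW b S ∘ σ) = ((Equiv.Perm.sign σ : ℤ) : F) • Bel b S := by
  rw [AlternatingMap.map_perm, Bel, Units.smul_def, Int.cast_smul_eq_zsmul]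

lemma ιMulti_comp_mem_span (r : Fin n → Fin (2 * n)) :
    ιMulti F n (fun i => b (r i)) ∈ Submodule.span F (Set.range (Bel b)) := by
  by_cases hr : Function.Injective r
  · set S : NS n := ⟨Finset.image r Finset.univ, by
      rw [Finset.card_image_of_injective _ hr, Finset.card_univ, Fintype.card_fin]⟩ with hS
    have hmem : ∀ i, r i ∈ S.1 := fun i => Finset.mem_image_of_mem r (Finset.mem_univ i)
    set σ0 : Fin n → Fin n := fun i => (S.1.orderIsoOfFin S.2).symm ⟨r i, hmem i⟩ with hσ0
    have hσ0inj : Function.Injective σ0 := by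
      intro i j hij
      apply hr
      have := (S.1.orderIsoOfFin S.2).symm.injective.eq_iff.1 hij
      exact congrArg Subtype.val this
    set σ : Equiv.Perm (Fin n) := Equiv.ofBijective σ0
      (Finite.injective_iff_bijective.1 hσ0inj) with hσ
    have hkey : (fun i => b (r i)) = BW b S ∘ σ := by
      funext i
      show b (r i) = BW b S (σ0 i)
      rw [BW]
      congr 1
      rw [hσ0]
      rw [← Finset.coe_orderIsoOfFin_apply, OrderIso.apply_symm_apply]
    rw [hkey, ιMulti_basis_perm]
    exact Submodule.smul_mem _ _ (Submodule.subset_span (Set.mem_range_self S))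
  · rw [Function.not_injective_iff] at hr
    obtain ⟨i, j, hij, hne⟩ := hr
    rw [AlternatingMap.map_eq_zero_of_eq _ _ (by rw [hij]) hne]
    exact Submodule.zero_mem _

lemma mem_span_Bel (x : ExteriorAlgebra F V) (hx : x ∈ ⋀[F]^n V) :
    ∃ c : NS n → F, ∑ S, c S • Bel b S = x := by
  rw [← Submodule.mem_span_range_iff_exists_fun F]
  have h1 : (⋀[F]^n V : Submodule F _) ≤ Submodule.span F (Set.range (Bel b)) := by
    rw [← ιMulti_span_fixedDegree, Submodule.span_le]
    rintro _ ⟨v, rfl⟩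
    have hv : (ιMulti F n) v = (ιMulti F n) (fun i => ∑ k, b.repr (v i) k • b k) := by
      congr 1
      funext i
      rw [b.sum_repr (v i)]
    rw [hv]
    have hsum := (ιMulti F n (M := V)).toMultilinearMap.map_sum
      (g := fun i k => b.repr (v i) k • b k)
    rw [show ((ιMulti F n) fun i => ∑ k : Fin (2 * n), b.repr (v i) k • b k) =
      (ιMulti F n (M := V)).toMultilinearMap (fun i => ∑ k : Fin (2 * n),
        b.repr (v i) k • b k) from rfl, hsum]
    apply Submodule.sum_mem
    intro r _
    have hterm : ((ιMulti F n (M := V)).toMultilinearMap fun i => b.repr (v i) (r i) • b (r i)) =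
        (∏ i, b.repr (v i) (r i)) • (ιMulti F n (M := V)) (fun i => b (r i)) :=
      (ιMulti F n (M := V)).toMultilinearMap.map_smul_univ _ _
    rw [hterm]
    exact Submodule.smul_mem _ _ (ιMulti_comp_mem_span b r)
  exact h1 hx


lemma recon (x : ExteriorAlgebra F V) (hx : x ∈ ⋀[F]^n V) :
    x = ∑ S : NS n, ((eps (complNS S) : F) * phi b (Bel b (complNS S) * x)) • Bel b S := by
  classical
  obtain ⟨c, rfl⟩ := mem_span_Bel b x hx
  refine (Finset.sum_congr rfl fun S _ => ?_)
  congr 1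
  rw [Finset.mul_sum, map_sum]
  have hterm : ∀ S' : NS n, phi b (Bel b (complNS S) * (c S' • Bel b S')) =
      c S' * (if S' = S then (eps (complNS S) : F) else 0) := by
    intro S'
    rw [mul_smul_comm, map_smul, smul_eq_mul, phi_Bel_mul_Bel, complNS_complNS]
  simp_rw [hterm]
  rw [Finset.sum_eq_single S]
  · rw [if_pos rfl, ← mul_assoc, mul_comm (eps (complNS S) : F) (c S), mul_assoc,
      eps_sq, mul_one]
  · intro S' _ hne
    rw [if_neg hne, mul_zero]
  · intro habs
    exact absurd (Finset.mem_univ S) habs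

lemma det_BW_diag (h : V →ₗ[F] V →ₗ[F] F)
    (horth : ∀ i j, i ≠ j → h (b i) (b j) = 0) (S : NS n) :
    (Matrix.of fun i j => h (BW b S i) (BW b S j)).det = ∏ i ∈ S.1, h (b i) (b i) := by
  classical
  have hdiag : (Matrix.of fun i j => h (BW b S i) (BW b S j)) =
      Matrix.diagonal (fun i => h (BW b S i) (BW b S i)) := by
    ext i j
    by_cases hij : i = j
    · subst hij; simp
    · rw [Matrix.of_apply, Matrix.diagonal_apply_ne _ hij]
      exact horth _ _ (fun e => hij ((S.1.orderEmbOfFin S.2).injective e))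
  rw [hdiag, Matrix.det_diagonal]
  refine Finset.prod_bij (fun (i : Fin n) (_ : i ∈ Finset.univ) => (S.1.orderEmbOfFin S.2 i))
    (fun i _ => S.1.orderEmbOfFin_mem S.2 i)
    (fun i _ j _ e => (S.1.orderEmbOfFin S.2).injective e) ?_ ?_
  · intro x hx
    obtain ⟨i, hi⟩ := mem_iff_exists_orderEmbOfFin S.1 S.2 x hx
    exact ⟨i, Finset.mem_univ i, hi⟩
  · intro i _
    rfl

lemma det_BW_off (h : V →ₗ[F] V →ₗ[F] F)
    (horth : ∀ i j, i ≠ j → h (b i) (b j) = 0) (S T : NS n) (hTS : T ≠ S) :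
    (Matrix.of fun i j => h (BW b T i) (BW b S j)).det = 0 := by
  have hnsub : ¬ T.1 ⊆ S.1 := fun hsub =>
    hTS (Subtype.ext (Finset.eq_of_subset_of_card_le hsub (by rw [T.2, S.2])))
  obtain ⟨x, hxT, hxS⟩ := Finset.not_subset.1 hnsub
  obtain ⟨i, hi⟩ := mem_iff_exists_orderEmbOfFin T.1 T.2 x hxT
  apply Matrix.det_eq_zero_of_row_eq_zero i
  intro j
  rw [Matrix.of_apply, BW, BW, hi]
  exact horth _ _ (fun e => hxS (e ▸ S.1.orderEmbOfFin_mem S.2 j))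

end Stmt0Aux

open Stmt0Aux

/-- let `V` be a `2n`-dimensional vector space over a field `F` of
characteristic `≠ 2` with a nondegenerate symmetric bilinear form `h` and an
orthogonal basis `e₁,…,e_{2n}`; let `e = e₁ ∧ ⋯ ∧ e_{2n}`.  The map
`a_e : ⋀ⁿV → ⋀ⁿV` is the composition of `⋀ⁿ b_h : ⋀ⁿV → ⋀ⁿV*` with the
isomorphism `⋀ⁿV* → ⋀ⁿV` coming from the perfect wedge pairing
`⋀ⁿV × ⋀ⁿV → ⋀^{2n}V ≅ F·e`; it is characterized by
`ω ∧ a_e(ω') = det(h(vᵢ, wⱼ))·e` for `ω = v₁∧⋯∧vₙ`, `ω' = w₁∧⋯∧wₙ`.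
Then `a_e ∘ a_e = D·Id` where `D = (−1)ⁿ ∏ᵢ h(eᵢ, eᵢ)` is the discriminant. -/
theorem stmt_0 (F : Type*) [Field F] (hchar : ringChar F ≠ 2) (n : ℕ)
    (V : Type*) [AddCommGroup V] [Module F V]
    (b : Module.Basis (Fin (2 * n)) F V)
    (h : V →ₗ[F] V →ₗ[F] F)
    (hsymm : ∀ x y, h x y = h y x)
    (horth : ∀ i j, i ≠ j → h (b i) (b j) = 0)
    (hnd : ∀ i, h (b i) (b i) ≠ 0)
    (a : ⋀[F]^n V →ₗ[F] ⋀[F]^n V)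
    (ha : ∀ v w : Fin n → V,
      ExteriorAlgebra.ιMulti F n v * ((a (wedgeι F V n w) : ⋀[F]^n V) : ExteriorAlgebra F V) =
        (Matrix.of fun i j => h (v i) (w j)).det •
          ExteriorAlgebra.ιMulti F (2 * n) (fun i => b i)) :
    ∀ x : ⋀[F]^n V, a (a x) = ((-1 : F) ^ n * ∏ i, h (b i) (b i)) • x := by
  classical
  set Bs : NS n → (⋀[F]^n V : Submodule F (ExteriorAlgebra F V)) :=
    fun S => wedgeι F V n (BW b S) with hBs
  have hBsCoe : ∀ S, ((Bs S : ⋀[F]^n V) : ExteriorAlgebra F V) = Bel b S := fun S => rfl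
  have hE : phi b (ιMulti F (2 * n) (fun i => b i)) = 1 := by
    rw [phi_ιMulti]
    exact b.det_self
  have hpair : ∀ S T : NS n,
      phi b (Bel b T * ((a (Bs S) : ⋀[F]^n V) : ExteriorAlgebra F V)) =
        if T = S then ∏ i ∈ S.1, h (b i) (b i) else 0 := by
    intro S T
    rw [show Bel b T = ιMulti F n (BW b T) from rfl, hBs]
    rw [ha (BW b T) (BW b S), map_smul, hE, smul_eq_mul, mul_one]
    by_cases hTS : T = S
    · subst hTS
      rw [if_pos rfl, det_BW_diag b h horth]
    · rw [if_neg hTS, det_BW_off b h horth S T hTS]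
  have haB : ∀ S, a (Bs S) =
      ((eps S : F) * ∏ i ∈ S.1, h (b i) (b i)) • Bs (complNS S) := by
    intro S
    apply Subtype.ext
    have hrec := recon b ((a (Bs S) : ⋀[F]^n V) : ExteriorAlgebra F V) (a (Bs S)).2
    rw [hrec]
    have hterm : ∀ S' : NS n,
        ((eps (complNS S') : F) *
          phi b (Bel b (complNS S') * ((a (Bs S) : ⋀[F]^n V) : ExteriorAlgebra F V))) • Bel b S' =
        (if S' = complNS S then ((eps S : F) * ∏ i ∈ S.1, h (b i) (b i)) • Bel b (complNS S)
          else 0) := by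
      intro S'
      rw [hpair S (complNS S')]
      by_cases hS' : S' = complNS S
      · subst hS'
        rw [complNS_complNS, if_pos rfl, if_pos rfl]
      · have : complNS S' ≠ S := fun e => hS' (by rw [← e, complNS_complNS])
        rw [if_neg this, if_neg hS', mul_zero, zero_smul]
    rw [Finset.sum_congr rfl (fun S' _ => hterm S'), Finset.sum_ite_eq' Finset.univ (complNS S)]
    rw [if_pos (Finset.mem_univ _)]
    rfl
  have hepsmul : ∀ S : NS n, (eps S : F) * eps (complNS S) = (-1 : F) ^ n := by
    intro S
    have hcomm : Bel b (complNS S) * Bel b S =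
        ((-1 : F) ^ (n * n)) • (Bel b S * Bel b (complNS S)) :=
      ιMulti_mul_comm n n (BW b (complNS S)) (BW b S)
    have e1 : (eps (complNS S) : F) =
        phi b (Bel b (complNS S) * Bel b (complNS (complNS S))) := by
      rw [phi_Bel_mul_Bel, if_pos rfl]
    rw [complNS_complNS] at e1
    have e2 : (eps (complNS S) : F) = (-1 : F) ^ (n * n) * eps S := by
      rw [e1, hcomm, map_smul, phi_Bel_mul_Bel, if_pos rfl, smul_eq_mul]
    have hnn : (-1 : F) ^ (n * n) = (-1 : F) ^ n := by
      rcases Nat.even_or_odd n with he | ho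
      · rw [he.neg_one_pow, (he.mul_right n).neg_one_pow]
      · rw [ho.neg_one_pow, (ho.mul ho).neg_one_pow]
    have hsq := eps_sq (F := F) S
    rw [e2, hnn]
    calc (eps S : F) * ((-1 : F) ^ n * eps S)
        = ((eps S : F) * eps S) * (-1 : F) ^ n := by ring
      _ = (-1 : F) ^ n := by rw [hsq, one_mul]
  have hmain : ∀ S, a (a (Bs S)) = ((-1 : F) ^ n * ∏ i, h (b i) (b i)) • Bs S := by
    intro S
    rw [haB S, map_smul, haB (complNS S), complNS_complNS, smul_smul]
    congr 1
    have hprod := Finset.prod_mul_prod_compl S.1 (fun i => h (b i) (b i))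
    have hcompl : (complNS S).1 = S.1ᶜ := rfl
    rw [hcompl]
    calc ((eps S : F) * ∏ i ∈ S.1, h (b i) (b i)) *
          ((eps (complNS S) : F) * ∏ i ∈ S.1ᶜ, h (b i) (b i))
        = ((eps S : F) * eps (complNS S)) *
          ((∏ i ∈ S.1, h (b i) (b i)) * ∏ i ∈ S.1ᶜ, h (b i) (b i)) := by ring
      _ = (-1 : F) ^ n * ∏ i, h (b i) (b i) := by rw [hepsmul S, hprod]
  intro x
  obtain ⟨c, hc⟩ := mem_span_Bel b (x : ExteriorAlgebra F V) x.2
  have hx : x = ∑ S, c S • Bs S := by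
    apply Subtype.ext
    rw [← hc]
    simp [hBsCoe]
  rw [hx, map_sum, map_sum, Finset.smul_sum]
  refine Finset.sum_congr rfl fun S _ => ?_
  rw [map_smul, map_smul, hmain, smul_comm]
end

section
/- Let k be a field of characteristic ≠ 2, n even with n = 2m, J the standard skew-symmetric n×n matrix, and π₀ ∈ k a nonzero element with a square root √π₀ in k. If X is an n×n matrix over k satisfying Xᵗ J = J X and X² = π₀·I, then each of the eigenvalues √π₀ and −√π₀ of X occurs with even multiplicity; in particular det(X) = π₀^m and the multiplicity of √π₀ as a root of the characteristic polynomial of X is even. -/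
open Matrix Polynomial

open Module LinearMap.BilinForm

theorem even_finrank_of_alt_nondeg {K V : Type*} [Field K] [AddCommGroup V] [Module K V]
    [FiniteDimensional K V] (B : LinearMap.BilinForm K V)
    (halt : B.IsAlt) (hnd : B.Nondegenerate) : Even (finrank K V) := by
  by_cases h0 : finrank K V = 0
  · simp [h0]
  have : Nontrivial V := Module.nontrivial_of_finrank_pos (Nat.pos_of_ne_zero h0)
  obtain ⟨x, hx⟩ := exists_ne (0 : V)
  obtain ⟨y, hxy⟩ : ∃ y, B x y ≠ 0 := by
    by_contra h
    push_neg at h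
    exact hx (hnd.1 x h)
  have hyx : B y x = - B x y := (halt.neg_eq x y).symm
  have hy0 : y ≠ 0 := fun h => hxy (by simp [h])
  -- x, y linearly independent
  have hli : LinearIndependent K ![x, y] := by
    rw [LinearIndependent.pair_iff]
    intro c d hcd
    have h1 : B (c • x + d • y) y = 0 := by rw [hcd]; simp
    simp only [map_add, _root_.map_smul, LinearMap.add_apply, LinearMap.smul_apply,
      smul_eq_mul, halt.self_eq_zero, mul_zero, add_zero] at h1
    have hc : c = 0 := (mul_eq_zero.mp h1).resolve_right hxy
    subst hc
    simp only [zero_smul, zero_add] at hcd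
    exact ⟨rfl, (smul_eq_zero.mp hcd).resolve_right hy0⟩
  set W : Submodule K V := Submodule.span K (Set.range ![x, y]) with hWdef
  have hxW : x ∈ W := Submodule.subset_span ⟨0, rfl⟩
  have hyW : y ∈ W := Submodule.subset_span ⟨1, rfl⟩
  have hWrank : finrank K W = 2 := by
    rw [finrank_span_eq_card hli, Fintype.card_fin]
  -- restriction to W is nondegenerate
  have hWspan : ∀ z ∈ W, ∃ a b : K, a • x + b • y = z := by
    intro z hz
    rw [hWdef] at hz
    have hset : (Set.range ![x, y]) = {x, y} := by
      simp [Matrix.range_cons, Matrix.range_empty, Set.pair_comm]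
    rw [hset] at hz
    exact Submodule.mem_span_pair.mp hz
  have hndW : (B.restrict W).Nondegenerate := by
    refine (LinearMap.IsRefl.nondegenerate_iff_separatingLeft (B := B.restrict W)
      (fun a b h => halt.isRefl a b h)).mpr ?_
    rintro ⟨z, hz⟩ hz0
    obtain ⟨a, b, rfl⟩ := hWspan z hz
    have h1 := hz0 ⟨y, hyW⟩
    have h2 := hz0 ⟨x, hxW⟩
    simp only [restrict_apply, LinearMap.domRestrict_apply, map_add, _root_.map_smul,
      LinearMap.add_apply, LinearMap.smul_apply, smul_eq_mul, halt.self_eq_zero, mul_zero,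
      add_zero, zero_add, hyx] at h1 h2
    have ha : a = 0 := (mul_eq_zero.mp h1).resolve_right hxy
    have hb : b = 0 := by
      rcases mul_eq_zero.mp h2 with h | h
      · exact h
      · exact absurd (neg_eq_zero.mp h) hxy
    simp [ha, hb]
  have hrefl : B.IsRefl := halt.isRefl
  have hcompl : IsCompl W (B.orthogonal W) :=
    isCompl_orthogonal_of_restrict_nondegenerate hrefl hndW
  have hndO : (B.restrict (B.orthogonal W)).Nondegenerate := by
    apply B.nondegenerate_restrict_of_disjoint_orthogonal hrefl
    rw [orthogonal_orthogonal hnd hrefl]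
    exact hcompl.disjoint.symm
  have haltO : (B.restrict (B.orthogonal W)).IsAlt := fun z => halt z
  have hsum : finrank K W + finrank K (B.orthogonal W) = finrank K V :=
    Submodule.finrank_add_eq_of_isCompl hcompl
  have hlt : finrank K (B.orthogonal W) < finrank K V := by omega
  have hrec := even_finrank_of_alt_nondeg (B.restrict (B.orthogonal W)) haltO hndO
  have : finrank K V = 2 + finrank K (B.orthogonal W) := by omega
  rw [this]
  exact (even_two).add hrec
termination_by finrank K V

theorem charpoly_smul_id {K V : Type*} [Field K] [AddCommGroup V] [Module K V]
    [FiniteDimensional K V] (t : K) :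
    (t • (LinearMap.id : V →ₗ[K] V)).charpoly = (X - C t) ^ (finrank K V) := by
  classical
  rw [LinearMap.charpoly_def]
  have h1 : (LinearMap.toMatrix (Module.Free.chooseBasis K V) (Module.Free.chooseBasis K V))
      (t • LinearMap.id) = Matrix.diagonal (fun _ => t) := by
    rw [_root_.map_smul, LinearMap.toMatrix_id]
    ext i j
    by_cases h : i = j <;> simp [Matrix.one_apply, Matrix.diagonal, h]
  rw [h1, Matrix.charpoly, charmatrix]
  have h2 : Matrix.scalar (Module.Free.ChooseBasisIndex K V) (X : K[X]) - (C.mapMatrix (Matrix.diagonal (fun _ => t)))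
      = Matrix.diagonal (fun _ => (X : K[X]) - C t) := by
    ext i j
    by_cases h : i = j <;> simp [Matrix.scalar, Matrix.diagonal, h, RingHom.mapMatrix_apply]
  rw [h2, Matrix.det_diagonal, Finset.prod_const, Finset.card_univ,
    finrank_eq_card_chooseBasisIndex]

/-- if `X` is a `2m × 2m` matrix over a field `k` of characteristic `≠ 2`
with `XᵗJ = JX` (for the standard skew-symmetric matrix `J = J_{2m}`) and `X² = π₀·I`
where `π₀ = t²` with `t ≠ 0`, then `det X = π₀^m` and each of the eigenvalues `t = √π₀`
and `−t = −√π₀` occurs with even multiplicity in the characteristic polynomial of `X`. -/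
theorem stmt_4 (k : Type*) [Field k] (hchar : ringChar k ≠ 2) (m : ℕ)
    (t π₀ : k) (ht : t ≠ 0) (hπ₀ : π₀ = t ^ 2)
    (Hm : Matrix (Fin m) (Fin m) k)
    (hHm : ∀ i j, Hm i j = if j = Fin.rev i then 1 else 0)
    (J : Matrix (Fin m ⊕ Fin m) (Fin m ⊕ Fin m) k)
    (hJ : J = Matrix.fromBlocks 0 Hm (-Hm) 0)
    (X : Matrix (Fin m ⊕ Fin m) (Fin m ⊕ Fin m) k)
    (hXJ : Xᵀ * J = J * X) (hX2 : X * X = π₀ • (1 : Matrix _ _ k)) :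
    X.det = π₀ ^ m ∧ Even (X.charpoly.rootMultiplicity t) ∧
      Even (X.charpoly.rootMultiplicity (-t)) := by
  classical
  have htwo : (2 : k) ≠ 0 := Ring.two_ne_zero hchar
  have h2t : (2 * t) ≠ 0 := mul_ne_zero htwo ht
  -- basic facts about J
  have hHm2 : Hm * Hm = 1 := by
    ext i j
    simp only [Matrix.mul_apply, hHm, Matrix.one_apply, ite_mul, one_mul, zero_mul,
      mul_ite, mul_one, mul_zero]
    rw [Finset.sum_eq_single (Fin.rev i)]
    · simp [Fin.rev_rev, eq_comm]
    · intro b _ hb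
      simp [hb]
    · intro h
      exact absurd (Finset.mem_univ _) h
  have hHmT : Hmᵀ = Hm := by
    ext i j
    simp only [Matrix.transpose_apply, hHm]
    by_cases h : i = Fin.rev j
    · simp [h, Fin.rev_rev]
    · have h' : ¬ j = Fin.rev i := fun hh => h (by rw [hh, Fin.rev_rev])
      simp [h, h']
  have hJT : Jᵀ = -J := by
    rw [hJ, Matrix.fromBlocks_transpose]
    have : -Matrix.fromBlocks (0 : Matrix (Fin m) (Fin m) k) Hm (-Hm) 0
        = Matrix.fromBlocks 0 (-Hm) Hm 0 := by
      rw [Matrix.fromBlocks_neg]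
      simp
    rw [this]
    simp [hHmT]
  have hJJ : J * J = -1 := by
    rw [hJ, Matrix.fromBlocks_multiply]
    have : -(1 : Matrix (Fin m ⊕ Fin m) (Fin m ⊕ Fin m) k)
        = Matrix.fromBlocks (-(1 : Matrix (Fin m) (Fin m) k)) 0 0 (-1) := by
      rw [← Matrix.fromBlocks_one, Matrix.fromBlocks_neg]
      simp
    rw [this]
    simp [Matrix.mul_neg, hHm2]
  have hJdet : J.det ≠ 0 := by
    intro h
    have : (J * J).det = 0 := by rw [Matrix.det_mul, h, mul_zero]
    rw [hJJ] at this
    have hcard : ((-1 : Matrix (Fin m ⊕ Fin m) (Fin m ⊕ Fin m) k)).det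
        = (-1 : k) ^ (Fintype.card (Fin m ⊕ Fin m)) := by
      have h1 : (-1 : Matrix (Fin m ⊕ Fin m) (Fin m ⊕ Fin m) k)
          = -(1 : Matrix (Fin m ⊕ Fin m) (Fin m ⊕ Fin m) k) := rfl
      rw [h1, Matrix.det_neg, Matrix.det_one, mul_one]
    rw [hcard] at this
    exact pow_ne_zero _ (neg_ne_zero.mpr one_ne_zero) this
  -- the bilinear form
  set B : LinearMap.BilinForm k ((Fin m ⊕ Fin m) → k) := Matrix.toBilin' J with hB
  have hBapp : ∀ x y, B x y = x ⬝ᵥ J *ᵥ y := fun x y => Matrix.toBilin'_apply' J x y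
  have hnd : B.Nondegenerate :=
    (Matrix.nondegenerate_iff_det_ne_zero.mpr hJdet).toBilin'
  have halt : B.IsAlt := by
    intro x
    rw [hBapp]
    have h1 : x ⬝ᵥ J *ᵥ x = - (x ⬝ᵥ J *ᵥ x) := by
      conv_lhs => rw [dotProduct_mulVec]
      have : x ᵥ* J = -(J *ᵥ x) := by
        rw [← Matrix.vecMul_transpose, hJT]
        simp [Matrix.vecMul_neg]
      rw [this, neg_dotProduct, dotProduct_comm]
    exact (Ring.eq_self_iff_eq_zero_of_char_ne_two hchar).mp h1.symm
  have hsym : ∀ u v, B (X *ᵥ u) v = B u (X *ᵥ v) := by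
    intro u v
    rw [hBapp, hBapp, ← Matrix.vecMul_transpose, ← dotProduct_mulVec,
      Matrix.mulVec_mulVec, hXJ, ← Matrix.mulVec_mulVec]
  -- the eigenspaces
  set f : ((Fin m ⊕ Fin m) → k) →ₗ[k] ((Fin m ⊕ Fin m) → k) := X.mulVecLin with hf
  set Vp : Submodule k ((Fin m ⊕ Fin m) → k) := LinearMap.ker (f - t • LinearMap.id) with hVp
  set Vm : Submodule k ((Fin m ⊕ Fin m) → k) :=
    LinearMap.ker (f - (-t) • LinearMap.id) with hVm
  have hmemp : ∀ x, x ∈ Vp ↔ X *ᵥ x = t • x := by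
    intro x
    rw [hVp, LinearMap.mem_ker, LinearMap.sub_apply, LinearMap.smul_apply, LinearMap.id_apply,
      sub_eq_zero, hf, Matrix.mulVecLin_apply]
  have hmemm : ∀ x, x ∈ Vm ↔ X *ᵥ x = -(t • x) := by
    intro x
    rw [hVm, LinearMap.mem_ker, LinearMap.sub_apply, LinearMap.smul_apply, LinearMap.id_apply,
      sub_eq_zero, hf, Matrix.mulVecLin_apply, neg_smul]
  have hXX : ∀ v, X *ᵥ (X *ᵥ v) = (t * t) • v := by
    intro v
    rw [Matrix.mulVec_mulVec, hX2, hπ₀, Matrix.smul_mulVec, Matrix.one_mulVec, pow_two]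
  have hcompl : IsCompl Vp Vm := by
    constructor
    · rw [Submodule.disjoint_def]
      intro x hxp hxm
      rw [hmemp] at hxp
      rw [hmemm] at hxm
      have heq : t • x = -(t • x) := hxp.symm.trans hxm
      have h2 : t • x + t • x = 0 := add_eq_zero_iff_eq_neg.mpr heq
      have h3 : (2 * t) • x = 0 := by rw [mul_smul, two_smul]; exact h2
      exact (smul_eq_zero.mp h3).resolve_left h2t
    · rw [codisjoint_iff, eq_top_iff]
      intro v _
      have hup : (2 * t)⁻¹ • (t • v + X *ᵥ v) ∈ Vp := by
        rw [hmemp, Matrix.mulVec_smul, Matrix.mulVec_add, Matrix.mulVec_smul, hXX]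
        module
      have hum : (2 * t)⁻¹ • (t • v - X *ᵥ v) ∈ Vm := by
        rw [hmemm, Matrix.mulVec_smul, Matrix.mulVec_sub, Matrix.mulVec_smul, hXX]
        module
      have hsum : (2 * t)⁻¹ • (t • v + X *ᵥ v) + (2 * t)⁻¹ • (t • v - X *ᵥ v) = v := by
        rw [← smul_add]
        have : (t • v + X *ᵥ v) + (t • v - X *ᵥ v) = (2 * t) • v := by
          rw [two_mul, add_smul]
          abel
        rw [this, smul_smul, inv_mul_cancel₀ h2t, one_smul]
      exact Submodule.mem_sup.mpr ⟨_, hup, _, hum, hsum⟩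
  -- perpendicularity
  have hperp : ∀ x ∈ Vp, ∀ z ∈ Vm, B x z = 0 := by
    intro x hx z hz
    rw [hmemp] at hx
    rw [hmemm] at hz
    have h2 := hsym x z
    rw [hx, hz, _root_.map_smul, LinearMap.smul_apply, map_neg, _root_.map_smul] at h2
    have h1 : t • B x z = -(t • B x z) := h2
    have h0 := (Ring.eq_self_iff_eq_zero_of_char_ne_two hchar).mp h1.symm
    rw [smul_eq_mul] at h0
    exact (mul_eq_zero.mp h0).resolve_left ht
  have hrefl : B.IsRefl := halt.isRefl
  have hsup : ∀ w : (Fin m ⊕ Fin m) → k, ∃ p ∈ Vp, ∃ q ∈ Vm, p + q = w := by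
    intro w
    have hw : w ∈ Vp ⊔ Vm := by rw [hcompl.codisjoint.eq_top]; trivial
    obtain ⟨p, hp, q, hq, hpq⟩ := Submodule.mem_sup.mp hw
    exact ⟨p, hp, q, hq, hpq⟩
  have hndp : (B.restrict Vp).Nondegenerate := by
    refine (LinearMap.IsRefl.nondegenerate_iff_separatingLeft (B := B.restrict Vp)
      (fun a b h => halt.isRefl a b h)).mpr ?_
    rintro ⟨x, hx⟩ h0
    have hall : ∀ w, B x w = 0 := by
      intro w
      obtain ⟨p, hp, q, hq, rfl⟩ := hsup w
      have e1 : B x p = 0 := by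
        have := h0 ⟨p, hp⟩
        simpa [restrict_apply] using this
      have e2 : B x q = 0 := hperp x hx q hq
      rw [map_add, e1, e2, add_zero]
    exact Subtype.ext (hnd.1 x hall)
  have hndm : (B.restrict Vm).Nondegenerate := by
    refine (LinearMap.IsRefl.nondegenerate_iff_separatingLeft (B := B.restrict Vm)
      (fun a b h => halt.isRefl a b h)).mpr ?_
    rintro ⟨x, hx⟩ h0
    have hall : ∀ w, B x w = 0 := by
      intro w
      obtain ⟨p, hp, q, hq, rfl⟩ := hsup w
      have e1 : B x p = 0 := hrefl p x (hperp p hp x hx)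
      have e2 : B x q = 0 := by
        have := h0 ⟨q, hq⟩
        simpa [restrict_apply] using this
      rw [map_add, e1, e2, add_zero]
    exact Subtype.ext (hnd.1 x hall)
  have hevena : Even (finrank k Vp) :=
    even_finrank_of_alt_nondeg (B.restrict Vp) (fun z => halt z) hndp
  have hevenb : Even (finrank k Vm) :=
    even_finrank_of_alt_nondeg (B.restrict Vm) (fun z => halt z) hndm
  set a := finrank k Vp with ha
  set b := finrank k Vm with hb
  have hab : a + b = m + m := by
    rw [ha, hb, Submodule.finrank_add_eq_of_isCompl hcompl, Module.finrank_pi,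
      Fintype.card_sum, Fintype.card_fin]
  -- charpoly computation
  set e := Submodule.prodEquivOfIsCompl Vp Vm hcompl with he
  set g : (Vp × Vm) →ₗ[k] (Vp × Vm) :=
    LinearMap.prodMap (t • LinearMap.id) ((-t) • LinearMap.id) with hg
  have key : ∀ p : Vp × Vm, f (e p) = e (g p) := by
    rintro ⟨⟨x, hx⟩, ⟨y, hy⟩⟩
    have hx' := (hmemp x).mp hx
    have hy' := (hmemm y).mp hy
    rw [he]
    rw [Submodule.coe_prodEquivOfIsCompl', Submodule.coe_prodEquivOfIsCompl']
    simp only [hg, LinearMap.prodMap_apply, LinearMap.smul_apply, LinearMap.id_apply,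
      Submodule.coe_smul]
    rw [hf, Matrix.mulVecLin_apply]
    simp only [Matrix.mulVec_add, hx', hy']
    module
  have hfg : f = e.conj g := by
    apply LinearMap.ext
    intro v
    rw [LinearEquiv.conj_apply]
    have := key (e.symm v)
    simp only [LinearEquiv.apply_symm_apply] at this
    simpa using this
  have hfc : f.charpoly = ((Polynomial.X : k[X]) - C t) ^ a * ((Polynomial.X : k[X]) - C (-t)) ^ b := by
    rw [hfg, LinearEquiv.charpoly_conj, hg, LinearMap.charpoly_prodMap,
      charpoly_smul_id, charpoly_smul_id]
  have hXc : Matrix.charpoly X = ((Polynomial.X : k[X]) - C t) ^ a * ((Polynomial.X : k[X]) - C (-t)) ^ b := by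
    rw [← hfc, ← LinearMap.charpoly_toMatrix f (Pi.basisFun k (Fin m ⊕ Fin m))]
    congr 1
    rw [LinearMap.toMatrix_eq_toMatrix', hf, ← Matrix.toLin'_apply',
      LinearMap.toMatrix'_toLin']
  have hne : ((Polynomial.X : k[X]) - C t) ^ a * ((Polynomial.X : k[X]) - C (-t)) ^ b ≠ 0 :=
    (((monic_X_sub_C t).pow a).mul ((monic_X_sub_C (-t)).pow b)).ne_zero
  have h2t' : t + t ≠ 0 := by
    intro h
    exact h2t (by rw [two_mul]; exact h)
  have hrma : (Matrix.charpoly X).rootMultiplicity t = a := by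
    rw [hXc, Polynomial.rootMultiplicity_mul hne, rootMultiplicity_X_sub_C_pow,
      Polynomial.rootMultiplicity_eq_zero, add_zero]
    simp only [IsRoot, eval_pow, eval_sub, eval_X, eval_C, sub_neg_eq_add]
    exact pow_ne_zero _ h2t'
  have hrmb : (Matrix.charpoly X).rootMultiplicity (-t) = b := by
    rw [hXc, Polynomial.rootMultiplicity_mul hne, rootMultiplicity_X_sub_C_pow,
      Polynomial.rootMultiplicity_eq_zero, zero_add]
    simp only [IsRoot, eval_pow, eval_sub, eval_X, eval_C]
    have hne2 : (-t - t) ≠ 0 := by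
      have hx : (-t - t) = -(t + t) := by ring
      rw [hx]
      exact neg_ne_zero.mpr h2t'
    exact pow_ne_zero _ hne2
  have hdet : X.det = π₀ ^ m := by
    rw [Matrix.det_eq_sign_charpoly_coeff, hXc]
    rw [coeff_zero_eq_eval_zero]
    simp only [eval_mul, eval_pow, eval_sub, eval_X, eval_C, zero_sub, sub_neg_eq_add,
      zero_add, neg_neg]
    rw [hevena.neg_pow]
    have hcard : Fintype.card (Fin m ⊕ Fin m) = m + m := by
      rw [Fintype.card_sum, Fintype.card_fin]
    rw [hcard, Even.neg_one_pow ⟨m, rfl⟩, one_mul, ← pow_add, hab, hπ₀, ← pow_mul, two_mul]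
  exact ⟨hdet, hrma ▸ hevena, hrmb ▸ hevenb⟩
end

section
/- Let k be a field of characteristic ≠ 2 and let X be a 3×3 matrix over k written in block form X = [[X₁, X₂],[X₃, X₄]] with X₁ a 2×2 block, X₄ a scalar, X₃ = (x, y) a row vector, X₂ a column vector, satisfying: (i) ᵗX₃X₃ + ᵗJX₁ + ᵗX₁J = 0 where J = [[0,1],[−1,0]]; (ii) ᵗX₂ = X₄·(y, −x); (iii) X² = 0; (iv) tr(X) = 0 and X₄² = 0. Then X₄ = 0 and X is uniquely determined by (x, y): writing X₁ = [[a,b],[c,d]], one has c = x²/2, b = −y²/2, a − d = −xy, a + d = 0, and the map (x,y) ↦ X is injective. In particular, the scheme of such matrices is isomorphic to affine 2-space over k. -/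
open Matrix

/-- The conditions on the affine chart `₁U` of the local model `M^loc_{{1}}` for the
Picard surface (proof of Proposition 6.2, special fiber, i.e. `π₀ = 0`): a `3 × 3`
matrix `X` in block form `[[X₁, X₂],[X₃, X₄]]` (with `X₁` of size `2`, `X₃ = (x,y)`,
`X₄` scalar) satisfying the isotropy condition (i) `ᵗX₃X₃ + ᵗJX₁ + ᵗX₁J = 0`,
(ii) `ᵗX₂ = X₄·(y, −x)`, (iii) `X² = 0`, and (iv) `tr X = 0` and `X₄² = 0`. -/
def PicardChart (k : Type*) [Field k] (X : Matrix (Fin 3) (Fin 3) k) : Prop :=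
  Matrix.vecMulVec ![X 2 0, X 2 1] ![X 2 0, X 2 1] +
      ((Matrix.of ![![(0 : k), 1], ![-1, 0]])ᵀ * Matrix.of ![![X 0 0, X 0 1], ![X 1 0, X 1 1]] +
        (Matrix.of ![![X 0 0, X 0 1], ![X 1 0, X 1 1]])ᵀ * Matrix.of ![![(0 : k), 1], ![-1, 0]]) = 0 ∧
  X 0 2 = X 2 2 * X 2 1 ∧
  X 1 2 = -(X 2 2 * X 2 0) ∧
  X * X = 0 ∧
  Matrix.trace X = 0 ∧
  X 2 2 ^ 2 = 0

/-!
Condition (iv) forces `X₄ = 0`, hence `X₂ = 0` by (ii). Written out entrywise, the symmetric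
identity (i) reads `x² = 2c`, `xy = d - a`, `y² = -2b`, and the trace gives `a + d = 0`; once `2` is
invertible this determines `X` from `(x, y)`. Conversely, the resulting matrix is `u wᵀ` with
`u = (-y/2, x/2, 1)` and `w = (x, y, 0)`; since `w ⬝ u = 0` it is traceless and squares to zero.
-/

section

variable {R : Type*} [CommRing R]

lemma vecMulVec_add_symplectic_eq_zero_iff (v : Fin 2 → R) (A : Matrix (Fin 2) (Fin 2) R) :
    vecMulVec v v + ((of ![![(0 : R), 1], ![-1, 0]])ᵀ * A + Aᵀ * of ![![(0 : R), 1], ![-1, 0]]) = 0 ↔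
      2 * A 1 0 = v 0 ^ 2 ∧ 2 * A 0 1 = -(v 1 ^ 2) ∧ A 0 0 - A 1 1 = -(v 0 * v 1) := by
  rw [← Matrix.ext_iff, Fin.forall_fin_two, Fin.forall_fin_two, Fin.forall_fin_two]
  simp only [Fin.isValue, Matrix.add_apply, vecMulVec_apply, mul_apply, transpose_apply, of_apply,
    cons_val', cons_val_zero, cons_val_one, cons_val_fin_one, Fin.sum_univ_two, zero_mul, neg_mul,
    one_mul, zero_add, mul_zero, mul_neg, mul_one, Matrix.zero_apply, add_zero]
  constructor
  · rintro ⟨⟨h00, h01⟩, -, h11⟩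
    exact ⟨by linear_combination -h00, by linear_combination h11, by linear_combination h01⟩
  · rintro ⟨h10, h01, hd⟩
    exact ⟨⟨by linear_combination -h10, by linear_combination hd⟩,
      ⟨by linear_combination hd, by linear_combination h01⟩⟩

lemma vecMulVec_mul_self_eq_zero {n : Type*} [Fintype n] {u w : n → R} (h : w ⬝ᵥ u = 0) :
    vecMulVec u w * vecMulVec u w = 0 := by
  rw [vecMulVec_mul_vecMulVec, h, zero_smul]
  ext
  simp [vecMulVec_apply]

end

namespace PicardChart

variable {k : Type*} [Field k] {X : Matrix (Fin 3) (Fin 3) k}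

lemma isotropy (hX : PicardChart k X) :
    2 * X 1 0 = X 2 0 ^ 2 ∧ 2 * X 0 1 = -(X 2 1 ^ 2) ∧ X 0 0 - X 1 1 = -(X 2 0 * X 2 1) := by
  simpa using (vecMulVec_add_symplectic_eq_zero_iff _ _).1 hX.1

lemma entry_two_two (hX : PicardChart k X) : X 2 2 = 0 :=
  pow_eq_zero_iff two_ne_zero |>.1 hX.2.2.2.2.2

lemma entry_zero_two (hX : PicardChart k X) : X 0 2 = 0 := by
  rw [hX.2.1, hX.entry_two_two, zero_mul]

lemma entry_one_two (hX : PicardChart k X) : X 1 2 = 0 := by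
  rw [hX.2.2.1, hX.entry_two_two, zero_mul, neg_zero]

lemma entry_zero_zero_add_entry_one_one (hX : PicardChart k X) : X 0 0 + X 1 1 = 0 := by
  simpa [trace_fin_three, hX.entry_two_two] using hX.2.2.2.2.1

end PicardChart

section

variable {k : Type*} [Field k]

def picardPoint (x y : k) : Matrix (Fin 3) (Fin 3) k :=
  vecMulVec ![-(y / 2), x / 2, 1] ![x, y, 0]

lemma picardChart_picardPoint (h2 : (2 : k) ≠ 0) (x y : k) : PicardChart k (picardPoint x y) := by
  have horth : ![x, y, 0] ⬝ᵥ ![-(y / 2), x / 2, 1] = 0 := by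
    rw [vec3_dotProduct']; ring
  refine ⟨(vecMulVec_add_symplectic_eq_zero_iff _ _).2 ?_, ?_, ?_,
    vecMulVec_mul_self_eq_zero horth, ?_, ?_⟩
  · simp only [picardPoint, Fin.isValue, vecMulVec_apply, of_apply, cons_val', cons_val_zero,
      cons_val_one, cons_val_fin_one, cons_val, neg_mul, mul_neg, one_mul, neg_inj]
    exact ⟨by field_simp, by field_simp, by field_simp; ring⟩
  · simp [picardPoint, vecMulVec_apply]
  · simp [picardPoint, vecMulVec_apply]
  · rw [picardPoint, trace_vecMulVec, dotProduct_comm, horth]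
  · simp [picardPoint, vecMulVec_apply]

lemma PicardChart.eq_picardPoint (h2 : (2 : k) ≠ 0) {X : Matrix (Fin 3) (Fin 3) k}
    (hX : PicardChart k X) : X = picardPoint (X 2 0) (X 2 1) := by
  obtain ⟨hc, hb, hdiff⟩ := hX.isotropy
  have hsum := hX.entry_zero_zero_add_entry_one_one
  ext i j
  fin_cases i <;> fin_cases j <;>
    simp only [Fin.zero_eta, Fin.mk_one, Fin.reduceFinMk, Fin.isValue, picardPoint, vecMulVec_apply,
      cons_val_zero, cons_val_one, cons_val, neg_mul, mul_zero, one_mul]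
  · field_simp; linear_combination hdiff + hsum
  · field_simp; linear_combination hb
  · exact hX.entry_zero_two
  · field_simp; linear_combination hc
  · field_simp; linear_combination hsum - hdiff
  · exact hX.entry_one_two
  · exact hX.entry_two_two

end

/-- in the affine chart above one has `X₄ = 0`, the entries of `X₁` are
determined by `(x, y)` (namely `c = x²/2`, `b = −y²/2`, `a − d = −xy`, `a + d = 0`),
the matrix is uniquely determined by `(x, y)`, and every `(x, y)` arises; so the chart
is isomorphic to affine `2`-space. -/
theorem stmt_8 (k : Type*) [Field k] (hchar : ringChar k ≠ 2) :
    (∀ X : Matrix (Fin 3) (Fin 3) k, PicardChart k X →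
      (X 2 2 = 0 ∧ 2 * X 1 0 = X 2 0 ^ 2 ∧ 2 * X 0 1 = -(X 2 1 ^ 2) ∧
        X 0 0 - X 1 1 = -(X 2 0 * X 2 1) ∧ X 0 0 + X 1 1 = 0 ∧
        (∀ X' : Matrix (Fin 3) (Fin 3) k, PicardChart k X' →
          X' 2 0 = X 2 0 → X' 2 1 = X 2 1 → X' = X))) ∧
    (∀ x y : k, ∃ X : Matrix (Fin 3) (Fin 3) k,
      PicardChart k X ∧ X 2 0 = x ∧ X 2 1 = y) := by
  have h2 : (2 : k) ≠ 0 := Ring.two_ne_zero hchar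
  refine ⟨fun X hX => ⟨hX.entry_two_two, hX.isotropy.1, hX.isotropy.2.1, hX.isotropy.2.2,
    hX.entry_zero_zero_add_entry_one_one, fun X' hX' hx hy => ?_⟩, fun x y => ?_⟩
  · rw [hX'.eq_picardPoint h2, hx, hy, ← hX.eq_picardPoint h2]
  · exact ⟨picardPoint x y, picardChart_picardPoint h2 x y, by simp [picardPoint, vecMulVec_apply],
      by simp [picardPoint, vecMulVec_apply]⟩
end

section
/- Let k be a field of characteristic ≠ 2, n = 2m even, J = J_{2m} the standard skew-symmetric matrix. If X ∈ M_n(k) satisfies Xᵗ = −JXJ (i.e. X lies in the vector space p of the symmetric pair (gl(n), sp(n))) and X is nilpotent, then every Jordan block size of X occurs with even multiplicity; i.e. the Jordan type of X is of the form (a₁, a₁, a₂, a₂, ..., a_s, a_s). -/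
open Matrix

lemma skew_even_rank {k : Type*} [Field k] (hchar : ringChar k ≠ 2)
    {ι : Type*} [Fintype ι] [DecidableEq ι] (A : Matrix ι ι k) (hA : Aᵀ = -A) :
    Even A.rank := by
  classical
  obtain ⟨W, hW⟩ := (LinearMap.ker A.mulVecLin).exists_isCompl
  have hrank : A.rank = Module.finrank k W := by
    have h1 := LinearMap.finrank_range_add_finrank_ker A.mulVecLin
    have h2 := Submodule.finrank_add_eq_of_isCompl hW
    rw [Matrix.rank]; omega
  rw [hrank]
  -- the bilinear form restricted to W
  set B : W →ₗ[k] W →ₗ[k] k :=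
    (Matrix.toLinearMap₂' k A).compl₁₂ W.subtype W.subtype with hB
  have hBapp : ∀ x y : W, B x y = (x : ι → k) ⬝ᵥ A.mulVec (y : ι → k) := by
    intro x y
    simp [hB, LinearMap.compl₁₂_apply, Matrix.toLinearMap₂'_apply']
  have hsep : B.SeparatingLeft := by
    intro x hx
    have hall : ∀ v : ι → k, (x : ι → k) ⬝ᵥ A.mulVec v = 0 := by
      intro v
      have hv : v ∈ (LinearMap.ker A.mulVecLin) ⊔ W := by
        rw [hW.sup_eq_top]; trivial
      obtain ⟨p, hp, q, hq, rfl⟩ := Submodule.mem_sup.mp hv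
      have hp0 : A.mulVec p = 0 := hp
      have := hx ⟨q, hq⟩
      rw [hBapp] at this
      simp [Matrix.mulVec_add, dotProduct_add, hp0, this]
    have hAx : Aᵀ.mulVec (x : ι → k) = 0 := by
      funext i
      have := hall (Pi.single i 1)
      rwa [Matrix.dotProduct_mulVec, ← Matrix.mulVec_transpose,
        dotProduct_single, mul_one] at this
    have hx0 : (x : ι → k) ∈ LinearMap.ker A.mulVecLin := by
      rw [hA] at hAx
      simpa [Matrix.neg_mulVec, neg_eq_zero] using hAx
    have : (x : ι → k) ∈ (LinearMap.ker A.mulVecLin) ⊓ W := ⟨hx0, x.2⟩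
    rw [hW.inf_eq_bot] at this
    exact Subtype.ext this
  have hskew : ∀ x y : W, B y x = - B x y := by
    intro x y
    rw [hBapp, hBapp, Matrix.dotProduct_mulVec, ← Matrix.mulVec_transpose, hA,
      Matrix.neg_mulVec, neg_dotProduct, dotProduct_comm]
  -- take a basis of W and look at the matrix of B
  have : Module.Finite k W := inferInstance
  let b := Module.finBasis k W
  set M := LinearMap.toMatrix₂ b b B with hM
  have hdet : M.det ≠ 0 := (LinearMap.separatingLeft_iff_det_ne_zero b).mp hsep
  have hMskew : Mᵀ = -M := by
    ext i j
    simp only [Matrix.transpose_apply, Matrix.neg_apply, hM, LinearMap.toMatrix₂_apply]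
    exact hskew _ _
  have hdetM : M.det = (-1 : k) ^ (Module.finrank k W) * M.det := by
    conv_lhs => rw [← Matrix.det_transpose, hMskew, Matrix.det_neg]
    simp
  rcases Nat.even_or_odd (Module.finrank k W) with h | h
  · exact h
  · exfalso
    rw [h.neg_one_pow] at hdetM
    have h1 : (1 : k) * M.det = (-1 : k) * M.det := by rw [one_mul]; exact hdetM
    have : (1 : k) = -1 := mul_right_cancel₀ hdet h1
    exact Ring.neg_one_ne_one_of_char_ne_two hchar this.symm

/-- let `k` be an algebraically closed field of characteristic `≠ 2`,
`n = 2m`, and `J = J_{2m}` the standard skew-symmetric matrix.  If `X` is nilpotent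
and satisfies `XᵗJ = JX` (i.e. `X` lies in the vector part `p` of the symmetric pair
`(gl(n), sp(n))`), then every Jordan block size of `X` occurs with even multiplicity.
The multiplicity of the Jordan block of size `j ≥ 1` is
`rank X^{j−1} − 2·rank X^j + rank X^{j+1}`; it is even if and only if
`rank X^{j−1} + rank X^{j+1}` is even, which is how the conclusion is phrased. -/
theorem stmt_11 (k : Type*) [Field k] [IsAlgClosed k] (hchar : ringChar k ≠ 2) (m : ℕ)
    (Hm : Matrix (Fin m) (Fin m) k)
    (hHm : ∀ i j, Hm i j = if j = Fin.rev i then 1 else 0)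
    (J : Matrix (Fin m ⊕ Fin m) (Fin m ⊕ Fin m) k)
    (hJ : J = Matrix.fromBlocks 0 Hm (-Hm) 0)
    (X : Matrix (Fin m ⊕ Fin m) (Fin m ⊕ Fin m) k)
    (hXJ : Xᵀ * J = J * X) (hnil : IsNilpotent X) :
    ∀ j : ℕ, 1 ≤ j → Even ((X ^ (j - 1)).rank + (X ^ (j + 1)).rank) := by
  classical
  have hHsym : Hmᵀ = Hm := by
    ext i j
    rw [Matrix.transpose_apply, hHm, hHm]
    have : i = Fin.rev j ↔ j = Fin.rev i := by
      constructor <;> rintro rfl <;> simp [Fin.rev_rev]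
    simp [this]
  have hHH : Hm * Hm = 1 := by
    ext i j
    rw [Matrix.mul_apply, Finset.sum_eq_single (Fin.rev i)]
    · rw [hHm, hHm, Matrix.one_apply]
      simp [Fin.rev_rev, eq_comm]
    · intro l _ hl
      rw [hHm]
      simp [hl]
    · simp
  have hJT : Jᵀ = -J := by
    rw [hJ, Matrix.fromBlocks_transpose, hHsym]
    have hsym' : ∀ i j, Hm j i = Hm i j := fun i j => by
      conv_lhs => rw [← hHsym, Matrix.transpose_apply]
    ext (i | i) (j | j) <;> simp [Matrix.fromBlocks] <;> exact hsym' _ _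
  have hJJ : J * J = -1 := by
    rw [hJ, Matrix.fromBlocks_multiply]
    simp only [Matrix.mul_zero, Matrix.zero_mul, Matrix.mul_neg, Matrix.neg_mul, hHH,
      zero_add, add_zero, neg_neg]
    ext (i | i) (j | j) <;>
      simp [Matrix.fromBlocks, Matrix.one_apply, Matrix.neg_apply]
  have hJdet : IsUnit J.det := by
    have : J.det * J.det = 1 := by
      rw [← Matrix.det_mul, hJJ]
      have : (-1 : Matrix (Fin m ⊕ Fin m) (Fin m ⊕ Fin m) k) = -(1 : _) := rfl
      rw [this, Matrix.det_neg, Matrix.det_one, mul_one]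
      simp [Fintype.card_sum, (Even.add_self m).neg_one_pow]
    exact IsUnit.of_mul_eq_one _ this
  have hpow : ∀ p : ℕ, (Xᵀ) ^ p * J = J * X ^ p := by
    intro p
    induction p with
    | zero => simp
    | succ q ih =>
      rw [pow_succ, pow_succ, mul_assoc, hXJ, ← mul_assoc, ih, mul_assoc]
  have key : ∀ p : ℕ, Even ((X ^ p).rank) := by
    intro p
    have hskew : (J * X ^ p)ᵀ = -(J * X ^ p) := by
      rw [Matrix.transpose_mul, Matrix.transpose_pow, hJT, Matrix.mul_neg, hpow]
    have := skew_even_rank hchar (J * X ^ p) hskew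
    rwa [Matrix.rank_mul_eq_right_of_isUnit_det J (X ^ p) hJdet] at this
  intro j _
  exact (key (j - 1)).add (key (j + 1))
end

section
/- Let F₀ ⊂ F be as above with π² = π₀, and let V = F^n with the split hermitian form φ(e_i, e_{n+1-j}) = δ_{ij}. Let S ⊂ {1,...,n} be a subset of cardinality s with S ∩ S* = ∅, where S* = {n+1−a : a ∈ S}, and let R = {1,...,n} ∖ S*. Set π̃ = π ⊗ 1 − 1 ⊗ π ∈ F ⊗_{F₀} F acting on V ⊗_{F₀} F. Then the F-subspace F_S of V ⊗_{F₀} F (second factor gives the F-structure) spanned by {e_i ⊗ 1 : i ∈ S*} ∪ {π e_i ⊗ 1 : i ∈ S*} ∪ {π̃(e_i ⊗ 1) : i ∈ R ∖ S} has dimension n, is stable under π ⊗ 1, is totally isotropic for the F-bilinear extension of the alternating form ⟨ , ⟩, and the characteristic polynomial of π ⊗ 1 acting on F_S equals (T + π)^{n−s}(T − π)^{s} where on the right π denotes 1 ⊗ π. -/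
open scoped TensorProduct

/-- The `F`-linear endomorphism `π ⊗ 1` of `F ⊗_{F₀} V` obtained by base change of
the `F₀`-linear multiplication by `π` on `V` (here the `F`-structure of the base
change is via the left factor, corresponding to the second factor in the paper). -/
noncomputable def piTensor (F₀ F : Type*) [Field F₀] [Field F] [Algebra F₀ F]
    (n : ℕ) (π : F) :
    (F ⊗[F₀] (Fin n → F)) →ₗ[F] (F ⊗[F₀] (Fin n → F)) :=
  LinearMap.baseChange F ((LinearMap.lsmul F (Fin n → F) π).restrictScalars F₀)

/-- The subspace `F_S ⊂ V ⊗_{F₀} F` of §3.4: the `F`-span of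
`{eᵢ ⊗ 1 : i ∈ S*} ∪ {πeᵢ ⊗ 1 : i ∈ S*} ∪ {π̃(eᵢ ⊗ 1) : i ∈ R ∖ S}`,
where `S* = Fin.rev '' S`, `R ∖ S = (S ∪ S*)ᶜ` and `π̃ = π ⊗ 1 − 1 ⊗ π`. -/
noncomputable def FSsub (F₀ F : Type*) [Field F₀] [Field F] [Algebra F₀ F]
    (n : ℕ) (π : F) (S : Finset (Fin n)) :
    Submodule F (F ⊗[F₀] (Fin n → F)) :=
  Submodule.span F
    ({x | ∃ i ∈ S.image Fin.rev, x = (1 : F) ⊗ₜ[F₀] (Pi.single i (1 : F) : Fin n → F)} ∪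
     {x | ∃ i ∈ S.image Fin.rev, x = (1 : F) ⊗ₜ[F₀] (π • (Pi.single i (1 : F) : Fin n → F))} ∪
     {x | ∃ i : Fin n, i ∉ S ∧ i ∉ S.image Fin.rev ∧
        x = (1 : F) ⊗ₜ[F₀] (π • (Pi.single i (1 : F) : Fin n → F)) -
              π • ((1 : F) ⊗ₜ[F₀] (Pi.single i (1 : F) : Fin n → F))})

noncomputable def eA (F₀ F : Type*) [Field F₀] [Field F] [Algebra F₀ F] {n : ℕ}
    (i : Fin n) : F ⊗[F₀] (Fin n → F) := (1 : F) ⊗ₜ[F₀] (Pi.single i (1 : F))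

noncomputable def eB (F₀ F : Type*) [Field F₀] [Field F] [Algebra F₀ F] {n : ℕ}
    (π : F) (i : Fin n) : F ⊗[F₀] (Fin n → F) :=
  (1 : F) ⊗ₜ[F₀] (π • (Pi.single i (1 : F) : Fin n → F))

lemma exists_bF (F₀ F : Type*) [Field F₀] [Field F] [Algebra F₀ F]
    (π : F) (hπni : π ∉ Set.range (algebraMap F₀ F))
    (hspan : ∀ x : F, ∃ a b : F₀, x = algebraMap F₀ F a + algebraMap F₀ F b * π) :
    ∃ bF : Module.Basis (Fin 2) F₀ F, bF 0 = 1 ∧ bF 1 = π := by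
  have hπ0 : π ≠ 0 := fun h => hπni ⟨0, by simp [h]⟩
  have hli : LinearIndependent F₀ ![(1 : F), π] := by
    rw [linearIndependent_fin2]
    refine ⟨by simpa using hπ0, ?_⟩
    intro a h
    simp only [Matrix.cons_val_one, Matrix.head_cons, Matrix.cons_val_zero] at h
    rw [Algebra.smul_def] at h
    have ha : (algebraMap F₀ F a) ≠ 0 := by
      rintro h0; rw [h0, zero_mul] at h; exact one_ne_zero h.symm
    apply hπni
    refine ⟨a⁻¹, ?_⟩
    rw [map_inv₀]
    field_simp
    rw [mul_comm]
    exact h.symm.trans (mul_comm _ _)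
  have hsp : ⊤ ≤ Submodule.span F₀ (Set.range ![(1 : F), π]) := by
    intro x _
    obtain ⟨a, b, hab⟩ := hspan x
    have hr : ({1, π} : Set F) ⊆ Set.range ![(1 : F), π] := by
      rintro y (rfl | rfl)
      · exact ⟨0, rfl⟩
      · exact ⟨1, rfl⟩
    apply Submodule.span_mono hr
    exact Submodule.mem_span_pair.mpr ⟨a, b, by
      rw [Algebra.smul_def, Algebra.smul_def, mul_one, hab]⟩
  refine ⟨Module.Basis.mk hli hsp, ?_, ?_⟩ <;> simp [Module.Basis.mk_apply]

lemma exists_coords (F₀ F : Type*) [Field F₀] [Field F] [Algebra F₀ F]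
    (π : F) (hπni : π ∉ Set.range (algebraMap F₀ F))
    (hspan : ∀ x : F, ∃ a b : F₀, x = algebraMap F₀ F a + algebraMap F₀ F b * π)
    (n : ℕ) :
    ∃ cA cB : Fin n → ((F ⊗[F₀] (Fin n → F)) →ₗ[F] F),
      (∀ i j, cA j (eA F₀ F i) = if j = i then 1 else 0) ∧
      (∀ i j, cA j (eB F₀ F π i) = 0) ∧
      (∀ i j, cB j (eA F₀ F i) = 0) ∧
      (∀ i j, cB j (eB F₀ F π i) = if j = i then 1 else 0) := by
  obtain ⟨bF, hbF0, hbF1⟩ := exists_bF F₀ F π hπni hspan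
  set bT : Module.Basis (Fin 2) F (F ⊗[F₀] F) := Algebra.TensorProduct.basis F bF with hbT
  have hval : ∀ (c : F) (k : Fin 2), bT.repr ((1 : F) ⊗ₜ[F₀] c) k =
      algebraMap F₀ F (bF.repr c k) := by
    intro c k
    rw [hbT, Algebra.TensorProduct.basis_repr_tmul]
    simp
  have h1 : bF.repr (1 : F) = Finsupp.single 0 1 := by rw [← hbF0]; exact bF.repr_self 0
  have hπr : bF.repr π = Finsupp.single 1 1 := by rw [← hbF1]; exact bF.repr_self 1
  have h0 : bF.repr (0 : F) = 0 := map_zero _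
  refine ⟨fun j => (bT.coord 0) ∘ₗ
      (LinearMap.baseChange F ((LinearMap.proj j :
        (Fin n → F) →ₗ[F] F).restrictScalars F₀)),
    fun j => (bT.coord 1) ∘ₗ
      (LinearMap.baseChange F ((LinearMap.proj j :
        (Fin n → F) →ₗ[F] F).restrictScalars F₀)), ?_, ?_, ?_, ?_⟩ <;>
    intro i j <;>
    simp only [LinearMap.comp_apply, eA, eB, LinearMap.baseChange_tmul,
      LinearMap.restrictScalars_apply, LinearMap.proj_apply, Module.Basis.coord_apply] <;>
    by_cases h : j = i
  · subst h; simp [Pi.single_eq_same, hval, h1]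
  · rw [Pi.single_eq_of_ne h]; simp [hval, h0, h]
  · subst h
    rw [Pi.smul_apply, Pi.single_eq_same, smul_eq_mul, mul_one]
    simp [hval, hπr]
  · rw [Pi.smul_apply, Pi.single_eq_of_ne h, smul_zero]; simp [hval, h0]
  · subst h; simp [Pi.single_eq_same, hval, h1]
  · rw [Pi.single_eq_of_ne h]; simp [hval, h0, h]
  · subst h
    rw [Pi.smul_apply, Pi.single_eq_same, smul_eq_mul, mul_one]
    simp [hval, hπr]
  · rw [Pi.smul_apply, Pi.single_eq_of_ne h, smul_zero]; simp [hval, h0, h]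

noncomputable def wFam (F₀ F : Type*) [Field F₀] [Field F] [Algebra F₀ F] {n : ℕ}
    (π : F) (S : Finset (Fin n)) :
    ({x : Fin n // x ∈ S.image Fin.rev} ⊕ {x : Fin n // x ∉ S}) → F ⊗[F₀] (Fin n → F) :=
  Sum.elim (fun i => eB F₀ F π i.1 + π • eA F₀ F i.1)
           (fun i => eB F₀ F π i.1 - π • eA F₀ F i.1)

lemma wFam_indep (F₀ F : Type*) [Field F₀] [Field F] [Algebra F₀ F]
    (h2 : (2 : F) ≠ 0) (π : F) (hπ0 : π ≠ 0)
    (hπni : π ∉ Set.range (algebraMap F₀ F))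
    (hspan : ∀ x : F, ∃ a b : F₀, x = algebraMap F₀ F a + algebraMap F₀ F b * π)
    {n : ℕ} (S : Finset (Fin n)) :
    LinearIndependent F (wFam F₀ F π S) := by
  obtain ⟨cA, cB, hcAA, hcAB, hcBA, hcBB⟩ := exists_coords F₀ F π hπni hspan n
  rw [Fintype.linearIndependent_iff]
  intro g hg k
  have key : ∀ (ε : (F ⊗[F₀] (Fin n → F)) →ₗ[F] F),
      (∀ l, ε (wFam F₀ F π S l) = if l = k then 1 else 0) → g k = 0 := by
    intro ε hε
    have h0 := congrArg ε hg
    rw [map_sum, map_zero] at h0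
    simp only [map_smul, hε, smul_eq_mul, mul_ite, mul_one, mul_zero] at h0
    rwa [Finset.sum_ite_eq' Finset.univ k g, if_pos (Finset.mem_univ k)] at h0
  cases k with
  | inl i =>
    apply key ((2:F)⁻¹ • (cB i.1 + π⁻¹ • cA i.1))
    intro l
    cases l with
    | inl j =>
      simp only [wFam, Sum.elim_inl, LinearMap.smul_apply, LinearMap.add_apply,
        map_add, map_smul, hcAA, hcAB, hcBA, hcBB, smul_eq_mul]
      by_cases h : j = i
      · have : i.1 = j.1 := by rw [h]
        simp only [this, if_pos rfl, Sum.inl.injEq, h, if_pos]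
        field_simp
        ring
      · have hne : i.1 ≠ j.1 := fun hh => h (Subtype.ext hh.symm)
        have : (Sum.inl j : {x : Fin n // x ∈ S.image Fin.rev} ⊕ {x : Fin n // x ∉ S})
            ≠ Sum.inl i := by simp [h]
        simp [hne, this]
    | inr j =>
      simp only [wFam, Sum.elim_inr, LinearMap.smul_apply, LinearMap.add_apply,
        map_sub, map_add, map_smul, hcAA, hcAB, hcBA, hcBB, smul_eq_mul]
      by_cases h : i.1 = j.1 <;> simp [h] <;> field_simp <;> ring
  | inr i =>
    apply key ((2:F)⁻¹ • (cB i.1 - π⁻¹ • cA i.1))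
    intro l
    cases l with
    | inl j =>
      simp only [wFam, Sum.elim_inl, LinearMap.smul_apply, LinearMap.sub_apply,
        map_add, map_smul, hcAA, hcAB, hcBA, hcBB, smul_eq_mul]
      by_cases h : i.1 = j.1 <;> simp [h] <;> field_simp <;> ring
    | inr j =>
      simp only [wFam, Sum.elim_inr, LinearMap.smul_apply, LinearMap.sub_apply,
        map_sub, map_add, map_smul, hcAA, hcAB, hcBA, hcBB, smul_eq_mul]
      by_cases h : j = i
      · have : i.1 = j.1 := by rw [h]
        simp only [this, if_pos rfl, Sum.inr.injEq, h, if_pos]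
        field_simp
        ring
      · have hne : i.1 ≠ j.1 := fun hh => h (Subtype.ext hh.symm)
        have : (Sum.inr j : {x : Fin n // x ∈ S.image Fin.rev} ⊕ {x : Fin n // x ∉ S})
            ≠ Sum.inr i := by simp [h]
        simp [hne, this]

lemma wFam_span (F₀ F : Type*) [Field F₀] [Field F] [Algebra F₀ F]
    (h2 : (2 : F) ≠ 0) (π : F) (hπ0 : π ≠ 0)
    {n : ℕ} (S : Finset (Fin n)) (hdisj : ∀ i ∈ S, Fin.rev i ∉ S) :
    Submodule.span F (Set.range (wFam F₀ F π S)) = FSsub F₀ F n π S := by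
  have hmem : ∀ i : Fin n, i ∈ S.image Fin.rev → i ∉ S := by
    rintro i hi
    obtain ⟨i₀, hi₀, rfl⟩ := Finset.mem_image.mp hi
    exact hdisj i₀ hi₀
  apply le_antisymm
  · rw [Submodule.span_le]
    rintro x ⟨k, rfl⟩
    cases k with
    | inl i =>
      have h1 : eA F₀ F i.1 ∈ FSsub F₀ F n π S :=
        Submodule.subset_span (Or.inl (Or.inl ⟨i.1, i.2, rfl⟩))
      have hb : eB F₀ F π i.1 ∈ FSsub F₀ F n π S :=
        Submodule.subset_span (Or.inl (Or.inr ⟨i.1, i.2, rfl⟩))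
      exact Submodule.add_mem _ hb (Submodule.smul_mem _ _ h1)
    | inr i =>
      by_cases hi : i.1 ∈ S.image Fin.rev
      · have h1 : eA F₀ F i.1 ∈ FSsub F₀ F n π S :=
          Submodule.subset_span (Or.inl (Or.inl ⟨i.1, hi, rfl⟩))
        have hb : eB F₀ F π i.1 ∈ FSsub F₀ F n π S :=
          Submodule.subset_span (Or.inl (Or.inr ⟨i.1, hi, rfl⟩))
        exact Submodule.sub_mem _ hb (Submodule.smul_mem _ _ h1)
      · exact Submodule.subset_span (Or.inr ⟨i.1, i.2, hi, rfl⟩)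
  · rw [FSsub, Submodule.span_le]
    rintro x ((⟨i, hi, rfl⟩ | ⟨i, hi, rfl⟩) | ⟨i, hi1, hi2, rfl⟩)
    · -- eA i  for i ∈ S*
      have hiN : i ∉ S := hmem i hi
      have hp : wFam F₀ F π S (Sum.inl ⟨i, hi⟩) ∈
          Submodule.span F (Set.range (wFam F₀ F π S)) :=
        Submodule.subset_span (Set.mem_range_self _)
      have hm : wFam F₀ F π S (Sum.inr ⟨i, hiN⟩) ∈
          Submodule.span F (Set.range (wFam F₀ F π S)) :=
        Submodule.subset_span (Set.mem_range_self _)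
      have hsub : wFam F₀ F π S (Sum.inl ⟨i, hi⟩) - wFam F₀ F π S (Sum.inr ⟨i, hiN⟩)
          = ((2 : F) * π) • eA F₀ F i := by
        simp only [wFam, Sum.elim_inl, Sum.elim_inr]
        module
      have heq : ((1 : F) ⊗ₜ[F₀] (Pi.single i (1 : F) : Fin n → F)) =
          ((2 : F) * π)⁻¹ • (wFam F₀ F π S (Sum.inl ⟨i, hi⟩) -
            wFam F₀ F π S (Sum.inr ⟨i, hiN⟩)) := by
        rw [hsub, smul_smul, inv_mul_cancel₀ (mul_ne_zero h2 hπ0), one_smul, eA]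
      rw [heq]
      exact Submodule.smul_mem _ _ (Submodule.sub_mem _ hp hm)
    · -- eB i  for i ∈ S*
      have hiN : i ∉ S := hmem i hi
      have hp : wFam F₀ F π S (Sum.inl ⟨i, hi⟩) ∈
          Submodule.span F (Set.range (wFam F₀ F π S)) :=
        Submodule.subset_span (Set.mem_range_self _)
      have hm : wFam F₀ F π S (Sum.inr ⟨i, hiN⟩) ∈
          Submodule.span F (Set.range (wFam F₀ F π S)) :=
        Submodule.subset_span (Set.mem_range_self _)
      have hadd : wFam F₀ F π S (Sum.inl ⟨i, hi⟩) + wFam F₀ F π S (Sum.inr ⟨i, hiN⟩)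
          = (2 : F) • eB F₀ F π i := by
        simp only [wFam, Sum.elim_inl, Sum.elim_inr]
        module
      have heq : ((1 : F) ⊗ₜ[F₀] (π • (Pi.single i (1 : F) : Fin n → F))) =
          (2 : F)⁻¹ • (wFam F₀ F π S (Sum.inl ⟨i, hi⟩) +
            wFam F₀ F π S (Sum.inr ⟨i, hiN⟩)) := by
        rw [hadd, smul_smul, inv_mul_cancel₀ h2, one_smul, eB]
      rw [heq]
      exact Submodule.smul_mem _ _ (Submodule.add_mem _ hp hm)
    · -- the C generator
      exact Submodule.subset_span ⟨Sum.inr ⟨i, hi1⟩, rfl⟩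

lemma piTensor_eA (F₀ F : Type*) [Field F₀] [Field F] [Algebra F₀ F]
    {n : ℕ} (π : F) (i : Fin n) :
    piTensor F₀ F n π (eA F₀ F i) = eB F₀ F π i := by
  simp [piTensor, eA, eB, LinearMap.baseChange_tmul]

lemma piTensor_eB (F₀ F : Type*) [Field F₀] [Field F] [Algebra F₀ F]
    {n : ℕ} (π : F) (hπ2 : π ^ 2 ∈ Set.range (algebraMap F₀ F)) (i : Fin n) :
    piTensor F₀ F n π (eB F₀ F π i) = (π ^ 2) • eA F₀ F i := by
  obtain ⟨c, hc⟩ := hπ2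
  have hx : π • π • (Pi.single i (1 : F) : Fin n → F)
      = c • (Pi.single i (1 : F) : Fin n → F) := by
    rw [smul_smul, ← pow_two, ← hc, algebraMap_smul]
  calc piTensor F₀ F n π (eB F₀ F π i)
      = (1 : F) ⊗ₜ[F₀] (π • π • (Pi.single i (1 : F) : Fin n → F)) := by
        simp [piTensor, eB, LinearMap.baseChange_tmul]
    _ = (1 : F) ⊗ₜ[F₀] (c • (Pi.single i (1 : F) : Fin n → F)) := by rw [hx]
    _ = c • ((1 : F) ⊗ₜ[F₀] (Pi.single i (1 : F) : Fin n → F)) :=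
        TensorProduct.tmul_smul c _ _
    _ = (π ^ 2) • eA F₀ F i := by
        rw [eA, ← algebraMap_smul F c, hc]

lemma piTensor_wFam (F₀ F : Type*) [Field F₀] [Field F] [Algebra F₀ F]
    {n : ℕ} (π : F) (hπ2 : π ^ 2 ∈ Set.range (algebraMap F₀ F))
    (S : Finset (Fin n)) (k : {x : Fin n // x ∈ S.image Fin.rev} ⊕ {x : Fin n // x ∉ S}) :
    piTensor F₀ F n π (wFam F₀ F π S k) =
      (Sum.elim (fun _ => π) (fun _ => -π) k) • wFam F₀ F π S k := by
  cases k with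
  | inl i =>
    simp only [wFam, Sum.elim_inl, map_add, map_smul, piTensor_eA, piTensor_eB F₀ F π hπ2]
    module
  | inr i =>
    simp only [wFam, Sum.elim_inr, map_sub, map_smul, piTensor_eA, piTensor_eB F₀ F π hπ2]
    module

lemma B_vanish (F₀ F : Type*) [Field F₀] [Field F] [Algebra F₀ F]
    (h2 : (2 : F) ≠ 0)
    (conj : F ≃+* F)
    (hinv : ∀ x, conj (conj x) = x)
    (π : F) (hπ0 : π ≠ 0) (hπc : conj π = -π)
    (n : ℕ) (S : Finset (Fin n)) (hdisj : ∀ i ∈ S, Fin.rev i ∉ S)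
    (B : (F ⊗[F₀] (Fin n → F)) →ₗ[F] (F ⊗[F₀] (Fin n → F)) →ₗ[F] F)
    (hB : ∀ x y : Fin n → F,
      B ((1 : F) ⊗ₜ[F₀] x) ((1 : F) ⊗ₜ[F₀] y) =
        (2 : F)⁻¹ * (π⁻¹ * (∑ i, x i * conj (y (Fin.rev i))) +
          conj (π⁻¹ * (∑ i, x i * conj (y (Fin.rev i)))))) :
    ∀ x ∈ FSsub F₀ F n π S, ∀ y ∈ FSsub F₀ F n π S, B x y = 0 := by
  have hcinv : conj π⁻¹ = -π⁻¹ := by rw [map_inv₀, hπc, inv_neg]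
  -- the scalar sum computation
  have hsum : ∀ (a b : F) (i j : Fin n),
      (∑ k, (a • (Pi.single i (1:F) : Fin n → F)) k *
        conj ((b • (Pi.single j (1:F) : Fin n → F)) (Fin.rev k))) =
      if i = Fin.rev j then a * conj b else 0 := by
    intro a b i j
    have hterm : ∀ k : Fin n, (a • (Pi.single i (1:F) : Fin n → F)) k *
        conj ((b • (Pi.single j (1:F) : Fin n → F)) (Fin.rev k)) =
        if k = i then (if k = Fin.rev j then a * conj b else 0) else 0 := by
      intro k
      have hrevc : (Fin.rev k = j) = (k = Fin.rev j) := by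
        rw [Fin.rev_eq_iff]
      by_cases hk : k = i <;> by_cases hk' : k = Fin.rev j
      · subst hk; subst hk'
        simp [Pi.single_apply, Fin.rev_rev, mul_comm]
      · subst hk
        have : Fin.rev k ≠ j := fun h => hk' (by rw [← h, Fin.rev_rev])
        simp [Pi.single_apply, this, hk']
      · subst hk'
        simp [Pi.single_apply, hk]
      · have : Fin.rev k ≠ j := fun h => hk' (by rw [← h, Fin.rev_rev])
        simp [Pi.single_apply, hk, this]
    rw [Finset.sum_congr rfl (fun k _ => hterm k),
      Finset.sum_ite_eq' Finset.univ i
        (fun k => if k = Fin.rev j then a * conj b else 0)]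
    simp
  have hBab : ∀ (a b : F) (i j : Fin n),
      B ((1:F) ⊗ₜ[F₀] (a • (Pi.single i (1:F) : Fin n → F)))
        ((1:F) ⊗ₜ[F₀] (b • (Pi.single j (1:F) : Fin n → F))) =
      if i = Fin.rev j then
        (2:F)⁻¹ * (π⁻¹ * (a * conj b) + conj (π⁻¹ * (a * conj b))) else 0 := by
    intro a b i j
    rw [hB, hsum]
    by_cases h : i = Fin.rev j <;> simp [h]
  -- specific values
  have h1s : ∀ i : Fin n, ((1:F) ⊗ₜ[F₀] (Pi.single i (1:F) : Fin n → F)) =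
      ((1:F) ⊗ₜ[F₀] ((1:F) • (Pi.single i (1:F) : Fin n → F))) := by
    intro i; rw [one_smul]
  have hAA : ∀ i j : Fin n, B (eA F₀ F i) (eA F₀ F j) = 0 := by
    intro i j
    rw [eA, eA, h1s i, h1s j, hBab]
    have : (2:F)⁻¹ * (π⁻¹ * ((1:F) * conj 1) + conj (π⁻¹ * ((1:F) * conj 1))) = 0 := by
      rw [map_one]
      rw [map_mul, map_mul, hcinv, map_one]
      ring
    rw [this]
    exact ite_self 0
  have hBB : ∀ i j : Fin n, B (eB F₀ F π i) (eB F₀ F π j) = 0 := by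
    intro i j
    rw [eB, eB, hBab]
    have : (2:F)⁻¹ * (π⁻¹ * (π * conj π) + conj (π⁻¹ * (π * conj π))) = 0 := by
      rw [hπc, map_mul, map_mul, hcinv, hπc, map_neg, hπc, neg_neg]
      ring
    rw [this]
    exact ite_self 0
  have hBvA : ∀ i j : Fin n, B (eB F₀ F π i) (eA F₀ F j) =
      if i = Fin.rev j then 1 else 0 := by
    intro i j
    rw [eB, eA, h1s j, hBab]
    have : (2:F)⁻¹ * (π⁻¹ * (π * conj 1) + conj (π⁻¹ * (π * conj 1))) = 1 := by
      rw [map_one, mul_one, map_mul, hcinv, hπc, inv_mul_cancel₀ hπ0]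
      field_simp
      norm_num
    rw [this]
  have hABv : ∀ i j : Fin n, B (eA F₀ F i) (eB F₀ F π j) =
      if i = Fin.rev j then -1 else 0 := by
    intro i j
    rw [eA, eB, h1s i, hBab]
    have : (2:F)⁻¹ * (π⁻¹ * ((1:F) * conj π) + conj (π⁻¹ * ((1:F) * conj π))) = -1 := by
      rw [hπc, one_mul, map_mul, hcinv, map_neg, hπc, neg_neg]
      field_simp
      norm_num
    rw [this]
  -- membership helpers
  have hSstar : ∀ i : Fin n, i ∈ S.image Fin.rev ↔ Fin.rev i ∈ S := by
    intro i
    simp [Finset.mem_image, Fin.rev_eq_iff]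
  have hmem : ∀ i : Fin n, i ∈ S.image Fin.rev → i ∉ S := by
    rintro i hi
    obtain ⟨i₀, hi₀, rfl⟩ := Finset.mem_image.mp hi
    exact hdisj i₀ hi₀
  -- generator-pair vanishing
  have hgen : ∀ x ∈
      ({x | ∃ i ∈ S.image Fin.rev, x = (1 : F) ⊗ₜ[F₀] (Pi.single i (1 : F) : Fin n → F)} ∪
       {x | ∃ i ∈ S.image Fin.rev, x = (1 : F) ⊗ₜ[F₀] (π • (Pi.single i (1 : F) : Fin n → F))} ∪
       {x | ∃ i : Fin n, i ∉ S ∧ i ∉ S.image Fin.rev ∧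
          x = (1 : F) ⊗ₜ[F₀] (π • (Pi.single i (1 : F) : Fin n → F)) -
                π • ((1 : F) ⊗ₜ[F₀] (Pi.single i (1 : F) : Fin n → F))} : Set (F ⊗[F₀] (Fin n → F))), ∀ y ∈
      ({x | ∃ i ∈ S.image Fin.rev, x = (1 : F) ⊗ₜ[F₀] (Pi.single i (1 : F) : Fin n → F)} ∪
       {x | ∃ i ∈ S.image Fin.rev, x = (1 : F) ⊗ₜ[F₀] (π • (Pi.single i (1 : F) : Fin n → F))} ∪
       {x | ∃ i : Fin n, i ∉ S ∧ i ∉ S.image Fin.rev ∧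
          x = (1 : F) ⊗ₜ[F₀] (π • (Pi.single i (1 : F) : Fin n → F)) -
                π • ((1 : F) ⊗ₜ[F₀] (Pi.single i (1 : F) : Fin n → F))} : Set (F ⊗[F₀] (Fin n → F))),
      B x y = 0 := by
    rintro x ((⟨i, hi, rfl⟩ | ⟨i, hi, rfl⟩) | ⟨i, hi1, hi2, rfl⟩) y
        ((⟨j, hj, rfl⟩ | ⟨j, hj, rfl⟩) | ⟨j, hj1, hj2, rfl⟩)
    · exact hAA i j
    · -- eA i, eB j, i,j ∈ S*
      rw [show ((1 : F) ⊗ₜ[F₀] (Pi.single i (1 : F) : Fin n → F)) = eA F₀ F i from rfl,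
        show ((1 : F) ⊗ₜ[F₀] (π • (Pi.single j (1 : F) : Fin n → F))) = eB F₀ F π j from rfl,
        hABv]
      have : i ≠ Fin.rev j := fun h => (hmem i hi) (h ▸ (hSstar j).mp hj)
      simp [this]
    · -- eA i, C j
      have hx : B (eA F₀ F i) ((1 : F) ⊗ₜ[F₀] (π • (Pi.single j (1 : F) : Fin n → F)) -
          π • ((1 : F) ⊗ₜ[F₀] (Pi.single j (1 : F) : Fin n → F)))
          = B (eA F₀ F i) (eB F₀ F π j) - π * B (eA F₀ F i) (eA F₀ F j) := by
        rw [map_sub, map_smul, smul_eq_mul]; rfl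
      rw [show ((1 : F) ⊗ₜ[F₀] (Pi.single i (1 : F) : Fin n → F)) = eA F₀ F i from rfl, hx,
        hABv, hAA]
      have : i ≠ Fin.rev j := by
        intro h
        apply hj1
        have := (hSstar i).mp hi
        rw [h, Fin.rev_rev] at this
        exact this
      simp [this]
    · -- eB i, eA j
      rw [show ((1 : F) ⊗ₜ[F₀] (π • (Pi.single i (1 : F) : Fin n → F))) = eB F₀ F π i from rfl,
        show ((1 : F) ⊗ₜ[F₀] (Pi.single j (1 : F) : Fin n → F)) = eA F₀ F j from rfl, hBvA]
      have : i ≠ Fin.rev j := fun h => (hmem i hi) (h ▸ (hSstar j).mp hj)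
      simp [this]
    · exact hBB i j
    · -- eB i, C j
      have hx : B (eB F₀ F π i) ((1 : F) ⊗ₜ[F₀] (π • (Pi.single j (1 : F) : Fin n → F)) -
          π • ((1 : F) ⊗ₜ[F₀] (Pi.single j (1 : F) : Fin n → F)))
          = B (eB F₀ F π i) (eB F₀ F π j) - π * B (eB F₀ F π i) (eA F₀ F j) := by
        rw [map_sub, map_smul, smul_eq_mul]; rfl
      rw [show ((1 : F) ⊗ₜ[F₀] (π • (Pi.single i (1 : F) : Fin n → F))) = eB F₀ F π i from rfl,
        hx, hBB, hBvA]
      have : i ≠ Fin.rev j := by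
        intro h
        apply hj1
        have := (hSstar i).mp hi
        rw [h, Fin.rev_rev] at this
        exact this
      simp [this]
    · -- C i, eA j
      rw [show ((1 : F) ⊗ₜ[F₀] (π • (Pi.single i (1 : F) : Fin n → F)) -
          π • ((1 : F) ⊗ₜ[F₀] (Pi.single i (1 : F) : Fin n → F)))
          = eB F₀ F π i - π • eA F₀ F i from rfl,
        show ((1 : F) ⊗ₜ[F₀] (Pi.single j (1 : F) : Fin n → F)) = eA F₀ F j from rfl]
      simp only [map_sub, map_smul, LinearMap.sub_apply, LinearMap.smul_apply,
        hBvA, hAA, smul_eq_mul]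
      have : i ≠ Fin.rev j := fun h => hi1 (h ▸ (hSstar j).mp hj)
      simp [this]
    · -- C i, eB j
      rw [show ((1 : F) ⊗ₜ[F₀] (π • (Pi.single i (1 : F) : Fin n → F)) -
          π • ((1 : F) ⊗ₜ[F₀] (Pi.single i (1 : F) : Fin n → F)))
          = eB F₀ F π i - π • eA F₀ F i from rfl,
        show ((1 : F) ⊗ₜ[F₀] (π • (Pi.single j (1 : F) : Fin n → F))) = eB F₀ F π j from rfl]
      simp only [map_sub, map_smul, LinearMap.sub_apply, LinearMap.smul_apply,
        hBB, hABv, smul_eq_mul]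
      have : i ≠ Fin.rev j := fun h => hi1 (h ▸ (hSstar j).mp hj)
      simp [this]
    · -- C i, C j
      rw [show ((1 : F) ⊗ₜ[F₀] (π • (Pi.single i (1 : F) : Fin n → F)) -
          π • ((1 : F) ⊗ₜ[F₀] (Pi.single i (1 : F) : Fin n → F)))
          = eB F₀ F π i - π • eA F₀ F i from rfl,
        show ((1 : F) ⊗ₜ[F₀] (π • (Pi.single j (1 : F) : Fin n → F)) -
          π • ((1 : F) ⊗ₜ[F₀] (Pi.single j (1 : F) : Fin n → F)))
          = eB F₀ F π j - π • eA F₀ F j from rfl]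
      simp only [map_sub, map_smul, LinearMap.sub_apply, LinearMap.smul_apply,
        hBB, hBvA, hABv, hAA, smul_eq_mul]
      by_cases h : i = Fin.rev j <;> simp [h] <;> ring
  -- conclude by double span induction
  intro x hx y hy
  rw [FSsub] at hx hy
  exact Submodule.span_induction₂ (p := fun x y _ _ => B x y = 0)
    (fun x y hxs hys => hgen x hxs y hys)
    (fun y _ => by simp)
    (fun x _ => by simp)
    (fun x y z _ _ _ h1 h2 => by
      have h1' : B x z = 0 := h1
      have h2' : B y z = 0 := h2
      show B (x + y) z = 0
      rw [map_add, LinearMap.add_apply, h1', h2', add_zero])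
    (fun x y z _ _ _ h1 h2 => by
      have h2' : B x z = 0 := h2
      show B x (y + z) = 0
      have h1' : B x y = 0 := h1
      rw [map_add, h1', h2', add_zero])
    (fun r x y _ _ h => by
      have h' : B x y = 0 := h
      show B (r • x) y = 0
      rw [map_smul, LinearMap.smul_apply, h', smul_zero])
    (fun r x y _ _ h => by
      have h' : B x y = 0 := h
      show B x (r • y) = 0
      rw [map_smul, h', smul_zero])
    hx hy

/-- §3.4: let `F = F₀(π)`, `π² = π₀ ∈ F₀`, conjugation `π ↦ −π`, and
`V = Fⁿ` with the split hermitian form `φ(eᵢ, e_{n+1−j}) = δᵢⱼ`, i.e.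
`φ(x,y) = Σᵢ xᵢ · conj(y_{rev i})`.  Let `S ⊆ {1,…,n}` with `S ∩ S* = ∅` and
`s = |S|`, and let `B` be the `F`-bilinear extension to `V ⊗_{F₀} F` of the
alternating form `⟨x,y⟩ = ½Tr_{F/F₀}(π⁻¹φ(x,y))`.  Then the subspace `F_S` has
dimension `n`, is stable under `π ⊗ 1`, is totally isotropic for `B`, and the
characteristic polynomial of `π ⊗ 1` on `F_S` is `(T − π)^s (T + π)^{n−s}`. -/
theorem stmt_13 (F₀ F : Type*) [Field F₀] [Field F] [Algebra F₀ F]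
    [FiniteDimensional F₀ F]
    (h2 : (2 : F) ≠ 0)
    (conj : F ≃+* F)
    (hfix : ∀ c : F₀, conj (algebraMap F₀ F c) = algebraMap F₀ F c)
    (hinv : ∀ x, conj (conj x) = x)
    (π : F) (hπ0 : π ≠ 0) (hπc : conj π = -π)
    (hπ2 : π ^ 2 ∈ Set.range (algebraMap F₀ F))
    (hπni : π ∉ Set.range (algebraMap F₀ F))
    (hspan : ∀ x : F, ∃ a b : F₀, x = algebraMap F₀ F a + algebraMap F₀ F b * π)
    (n : ℕ) (S : Finset (Fin n)) (hdisj : ∀ i ∈ S, Fin.rev i ∉ S)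
    (B : (F ⊗[F₀] (Fin n → F)) →ₗ[F] (F ⊗[F₀] (Fin n → F)) →ₗ[F] F)
    (hB : ∀ x y : Fin n → F,
      B ((1 : F) ⊗ₜ[F₀] x) ((1 : F) ⊗ₜ[F₀] y) =
        (2 : F)⁻¹ * (π⁻¹ * (∑ i, x i * conj (y (Fin.rev i))) +
          conj (π⁻¹ * (∑ i, x i * conj (y (Fin.rev i)))))) :
    Module.finrank F (FSsub F₀ F n π S) = n ∧
    (∀ x ∈ FSsub F₀ F n π S, piTensor F₀ F n π x ∈ FSsub F₀ F n π S) ∧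
    (∀ x ∈ FSsub F₀ F n π S, ∀ y ∈ FSsub F₀ F n π S, B x y = 0) ∧
    (∀ (hst : ∀ x ∈ FSsub F₀ F n π S, piTensor F₀ F n π x ∈ FSsub F₀ F n π S)
        (bFS : Module.Basis (Fin n) F ↥(FSsub F₀ F n π S)),
      Matrix.charpoly (LinearMap.toMatrix bFS bFS ((piTensor F₀ F n π).restrict hst)) =
        (Polynomial.X - Polynomial.C π) ^ S.card *
          (Polynomial.X + Polynomial.C π) ^ (n - S.card)) := by
  have hindep := wFam_indep F₀ F h2 π hπ0 hπni hspan S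
  have hspan_eq := wFam_span F₀ F h2 π hπ0 S hdisj
  let b0 := Module.Basis.span hindep
  let bFS0 : Module.Basis ({x : Fin n // x ∈ S.image Fin.rev} ⊕ {x : Fin n // x ∉ S}) F
      ↥(FSsub F₀ F n π S) := b0.map (LinearEquiv.ofEq _ _ hspan_eq)
  have hbFS0 : ∀ k, (bFS0 k : F ⊗[F₀] (Fin n → F)) = wFam F₀ F π S k := by
    intro k
    simp only [bFS0, b0, Module.Basis.map_apply, LinearEquiv.coe_ofEq_apply]
    exact congrArg Subtype.val (Module.Basis.span_apply hindep k)
  have hcard1 : Fintype.card {x : Fin n // x ∈ S.image Fin.rev} = S.card := by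
    rw [Fintype.card_coe]
    exact Finset.card_image_of_injective S Fin.rev_injective
  have hcard2 : Fintype.card {x : Fin n // x ∉ S} = n - S.card := by
    rw [Fintype.card_subtype_compl]
    rw [Fintype.card_coe, Fintype.card_fin]
  have hle : S.card ≤ n := by
    have := Finset.card_le_univ S
    simpa using this
  have hstab : ∀ x ∈ FSsub F₀ F n π S, piTensor F₀ F n π x ∈ FSsub F₀ F n π S := by
    intro x hx
    rw [← hspan_eq] at hx ⊢
    induction hx using Submodule.span_induction with
    | mem z hz =>
      obtain ⟨k, rfl⟩ := hz
      rw [piTensor_wFam F₀ F π hπ2 S k]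
      exact Submodule.smul_mem _ _ (Submodule.subset_span (Set.mem_range_self k))
    | zero => rw [map_zero]; exact Submodule.zero_mem _
    | add u v hu hv ihu ihv => rw [map_add]; exact Submodule.add_mem _ ihu ihv
    | smul a u hu ih => rw [map_smul]; exact Submodule.smul_mem _ _ ih
  refine ⟨?_, hstab, B_vanish F₀ F h2 conj hinv π hπ0 hπc n S hdisj B hB, ?_⟩
  · rw [Module.finrank_eq_card_basis bFS0, Fintype.card_sum, hcard1, hcard2]
    omega
  · intro hst bFS
    haveI : Module.Finite F ↥(FSsub F₀ F n π S) := Module.Finite.of_basis bFS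
    haveI : Module.Free F ↥(FSsub F₀ F n π S) := Module.Free.of_basis bFS
    have e1 := LinearMap.charpoly_toMatrix (R := F) (M := ↥(FSsub F₀ F n π S))
      ((piTensor F₀ F n π).restrict hst) bFS
    have e2 := LinearMap.charpoly_toMatrix (R := F) (M := ↥(FSsub F₀ F n π S))
      ((piTensor F₀ F n π).restrict hst) bFS0
    rw [e1, ← e2]
    have hf : ∀ k, (piTensor F₀ F n π).restrict hst (bFS0 k) =
        (Sum.elim (fun _ => π) (fun _ => -π) k) • bFS0 k := by
      intro k
      apply Subtype.ext
      have h1 : ((piTensor F₀ F n π).restrict hst (bFS0 k) : F ⊗[F₀] (Fin n → F)) =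
          piTensor F₀ F n π (bFS0 k : F ⊗[F₀] (Fin n → F)) := rfl
      rw [h1, hbFS0 k, piTensor_wFam F₀ F π hπ2 S k]
      rw [Submodule.coe_smul, hbFS0 k]
    have hM : LinearMap.toMatrix bFS0 bFS0 ((piTensor F₀ F n π).restrict hst) =
        Matrix.diagonal (Sum.elim (fun _ => π) (fun _ => -π)) := by
      ext k l
      rw [LinearMap.toMatrix_apply, hf l, LinearEquiv.map_smul, Module.Basis.repr_self]
      by_cases h : k = l <;>
        simp [Finsupp.single_apply, Matrix.diagonal, h, eq_comm]
    rw [hM]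
    show (Matrix.charmatrix _).det = _
    have hcm : Matrix.charmatrix (Matrix.diagonal
          (Sum.elim (fun _ => (π : F)) (fun _ => -π) :
            ({x : Fin n // x ∈ S.image Fin.rev} ⊕ {x : Fin n // x ∉ S}) → F)) =
        Matrix.diagonal (fun k : ({x : Fin n // x ∈ S.image Fin.rev} ⊕ {x : Fin n // x ∉ S}) =>
          Polynomial.X - Polynomial.C (Sum.elim (fun _ => π) (fun _ => -π) k)) := by
      ext k l
      by_cases h : k = l <;>
        simp [Matrix.charmatrix_apply, Matrix.diagonal, h]
    rw [hcm, Matrix.det_diagonal, Fintype.prod_sum_type]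
    simp only [Sum.elim_inl, Sum.elim_inr, Finset.prod_const, map_neg, sub_neg_eq_add]
    rw [Finset.card_univ, Finset.card_univ, hcard1, hcard2]
end

section
/- In ℤ^m with the dominance partial order on the dominant cone C̄ = {x ∈ ℤ^m : x₁ ≥ x₂ ≥ ⋯ ≥ x_m ≥ 0}, generated by subtracting positive coroots of type C_m (the vectors e_i − e_j, e_i + e_j for i < j, and 2e_i), let λ_s = (1^{(s)}, 0^{(m−s)}) for 0 ≤ s ≤ m. Then the set of elements of C̄ which are ≤ λ_s in the dominance order is exactly {λ_s, λ_{s−2}, λ_{s−4}, ...}, ending at λ₁ if s is odd and at λ₀ = 0 if s is even. -/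
/-- `λ_s = (1^{(s)}, 0^{(m−s)}) ∈ ℤ^m`. -/
def lamVec (m s : ℕ) : Fin m → ℤ := fun i => if (i : ℕ) < s then 1 else 0

/-- The positive coroots of the root system `C_m`:
`e_i − e_j`, `e_i + e_j` for `i < j`, and `2e_i`. -/
def posCorootsC (m : ℕ) : Set (Fin m → ℤ) :=
  {v | ∃ i j : Fin m, i < j ∧
      (v = Pi.single i 1 - Pi.single j 1 ∨ v = Pi.single i 1 + Pi.single j 1)} ∪
  {v | ∃ i : Fin m, v = (2 : ℤ) • Pi.single i 1}

/-- The dominant cone `C̄ = {x ∈ ℤ^m : x₁ ≥ x₂ ≥ ⋯ ≥ x_m ≥ 0}`. -/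
def isDominant (m : ℕ) (x : Fin m → ℤ) : Prop :=
  (∀ i j : Fin m, i ≤ j → x j ≤ x i) ∧ ∀ i, 0 ≤ x i

/-- Key invariants of elements of the coroot monoid: the first coordinate is
nonnegative, and the coordinate sum is nonnegative and even. -/
lemma coroot_invariant (m : ℕ) (hm : 0 < m) (v : Fin m → ℤ)
    (hv : v ∈ AddSubmonoid.closure (posCorootsC m)) :
    0 ≤ v ⟨0, hm⟩ ∧ 0 ≤ ∑ i, v i ∧ (∑ i, v i) % 2 = 0 := by
  induction hv using AddSubmonoid.closure_induction with
  | mem x hx =>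
    have hs1 : ∀ a : Fin m, ∑ i, (Pi.single a 1 : Fin m → ℤ) i = 1 := by
      intro a; rw [Finset.sum_pi_single']; simp
    have hnn : ∀ a b : Fin m, (0 : ℤ) ≤ (Pi.single a 1 : Fin m → ℤ) b := by
      intro a b; rw [Pi.single_apply]; split <;> omega
    rcases hx with ⟨i, j, hij, hx | hx⟩ | ⟨i, hx⟩ <;> subst hx
    · have hj : (Pi.single j 1 : Fin m → ℤ) ⟨0, hm⟩ = 0 := by
        have hj0 : (0 : ℕ) ≠ (j : ℕ) := by
          have := hij; rw [Fin.lt_def] at this; omega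
        rw [Pi.single_apply, if_neg (by simpa [Fin.ext_iff] using hj0)]
      refine ⟨?_, ?_, ?_⟩
      · simp only [Pi.sub_apply, hj, sub_zero]; exact hnn i _
      · simp only [Pi.sub_apply, Finset.sum_sub_distrib, hs1]; norm_num
      · simp only [Pi.sub_apply, Finset.sum_sub_distrib, hs1]; norm_num
    · refine ⟨?_, ?_, ?_⟩
      · simp only [Pi.add_apply]; exact add_nonneg (hnn i _) (hnn j _)
      · simp only [Pi.add_apply, Finset.sum_add_distrib, hs1]; norm_num
      · simp only [Pi.add_apply, Finset.sum_add_distrib, hs1]; norm_num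
    · refine ⟨?_, ?_, ?_⟩
      · simp only [Pi.smul_apply, smul_eq_mul]
        exact mul_nonneg (by norm_num) (hnn i _)
      · simp only [Pi.smul_apply, smul_eq_mul, ← Finset.mul_sum, hs1]; norm_num
      · simp only [Pi.smul_apply, smul_eq_mul, ← Finset.mul_sum, hs1]; norm_num
  | zero => simp
  | add x y _ _ hx hy =>
    refine ⟨by simpa using add_nonneg hx.1 hy.1, ?_, ?_⟩ <;>
      simp only [Pi.add_apply, Finset.sum_add_distrib] <;> omega

/-- `λ_{t+2} − λ_t = e_t + e_{t+1}` is a positive coroot. -/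
lemma step_coroot (m t : ℕ) (ht : t + 2 ≤ m) :
    lamVec m (t + 2) - lamVec m t ∈ posCorootsC m := by
  left
  refine ⟨⟨t, by omega⟩, ⟨t + 1, by omega⟩, by simp [Fin.lt_def], Or.inr ?_⟩
  funext i
  simp only [lamVec, Pi.sub_apply, Pi.add_apply, Pi.single_apply, Fin.ext_iff]
  split_ifs <;> omega

lemma ladder (m : ℕ) : ∀ (k j : ℕ), j + 2 * k ≤ m →
    lamVec m (j + 2 * k) - lamVec m j ∈ AddSubmonoid.closure (posCorootsC m)
  | 0, j, _ => by
    simp only [Nat.mul_zero, Nat.add_zero, sub_self]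
    exact AddSubmonoid.zero_mem _
  | k + 1, j, h => by
    have h2 : j + 2 * k + 2 ≤ m := by omega
    have heq : lamVec m (j + 2 * (k + 1)) - lamVec m j =
        (lamVec m (j + 2 * k + 2) - lamVec m (j + 2 * k)) +
          (lamVec m (j + 2 * k) - lamVec m j) := by
      have e : j + 2 * (k + 1) = j + 2 * k + 2 := by omega
      rw [e, sub_add_sub_cancel]
    rw [heq]
    exact AddSubmonoid.add_mem _
      (AddSubmonoid.subset_closure (step_coroot m _ h2)) (ladder m k j (by omega))

/-- in the dominance order on the dominant cone of `ℤ^m` given by the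
positive coroots of type `C_m`, the elements below `λ_s` are exactly
`λ_s > λ_{s−2} > λ_{s−4} > ⋯`, ending at `λ₁` if `s` is odd and `λ₀ = 0` if `s` is
even.  (This computes `Adm₀(μ_{r,s})` for `GU_{2m}`.) -/
theorem stmt_15 (m s : ℕ) (hs : s ≤ m) (μ : Fin m → ℤ) (hμ : isDominant m μ) :
    lamVec m s - μ ∈ AddSubmonoid.closure (posCorootsC m) ↔
      ∃ j ≤ s, j % 2 = s % 2 ∧ μ = lamVec m j := by
  constructor
  · intro hv
    rcases Nat.eq_zero_or_pos m with hm | hm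
    · subst hm
      refine ⟨0, by omega, by omega, funext fun i => i.elim0⟩
    obtain ⟨h0, hsum, hpar⟩ := coroot_invariant m hm _ hv
    -- all coordinates of μ are 0 or 1
    have hμ0 : μ ⟨0, hm⟩ ≤ 1 := by
      have := h0
      simp only [Pi.sub_apply, lamVec] at this
      split_ifs at this <;> omega
    have h01 : ∀ i : Fin m, μ i = 0 ∨ μ i = 1 := by
      intro i
      have h1 := hμ.1 ⟨0, hm⟩ i (by simp [Fin.le_def])
      have h2 := hμ.2 i
      omega
    set T : Finset (Fin m) := Finset.univ.filter (fun i => μ i = 1) with hT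
    have hsum_eq : ∑ i, μ i = (T.card : ℤ) := by
      rw [hT, Finset.card_filter]
      push_cast
      refine Finset.sum_congr rfl fun i _ => ?_
      rcases h01 i with h | h <;> simp [h]
    have hmem : ∀ i : Fin m, μ i = 1 ↔ (i : ℕ) < T.card := by
      intro i
      constructor
      · intro hi
        have hsub : Finset.Iic i ⊆ T := by
          intro k hk
          simp only [Finset.mem_Iic] at hk
          have h1 := hμ.1 k i hk
          have h2 := hμ.1 ⟨0, hm⟩ k (by simp [Fin.le_def])
          rcases h01 k with h | h
          · omega
          · simp [hT, h]
        have := Finset.card_le_card hsub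
        rw [Fin.card_Iic] at this
        omega
      · intro hi
        by_contra hne
        have hi0 : μ i = 0 := by rcases h01 i with h | h; exact h; exact absurd h hne
        have hsub : T ⊆ Finset.Iio i := by
          intro k hk
          simp only [hT, Finset.mem_filter] at hk
          simp only [Finset.mem_Iio]
          by_contra hki
          have := hμ.1 i k (not_lt.mp hki)
          omega
        have := Finset.card_le_card hsub
        rw [Fin.card_Iio] at this
        omega
    have hμeq : μ = lamVec m T.card := by
      funext i
      simp only [lamVec]
      split_ifs with h
      · exact (hmem i).mpr h
      · rcases h01 i with h' | h'
        · exact h'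
        · exact absurd ((hmem i).mp h') h
    -- sum of λ_s is s
    have key : ∀ n : ℕ, (∑ i ∈ Finset.range n, if i < s then (1 : ℤ) else 0) =
        (min s n : ℕ) := by
      intro n
      induction n with
      | zero => simp
      | succ n ih =>
        rw [Finset.sum_range_succ, ih]
        split_ifs <;> push_cast <;> omega
    have hlam : ∑ i, lamVec m s i = (s : ℤ) := by
      rw [show (∑ i, lamVec m s i) =
          ∑ i ∈ Finset.range m, if i < s then (1 : ℤ) else 0 from
        Fin.sum_univ_eq_sum_range (fun i => if i < s then (1 : ℤ) else 0) m, key m]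
      rw [Nat.min_eq_left hs]
    simp only [Pi.sub_apply, Finset.sum_sub_distrib, hlam, hsum_eq] at hsum hpar
    exact ⟨T.card, by omega, by omega, hμeq⟩
  · rintro ⟨j, hj, hpar, rfl⟩
    obtain ⟨k, hk⟩ : ∃ k, s = j + 2 * k := ⟨(s - j) / 2, by omega⟩
    subst hk
    exact ladder m k j hs
end

section
/- In ℤ^m with the dominance partial order on the dominant cone C̄ = {x ∈ ℤ^m : x₁ ≥ ⋯ ≥ x_m ≥ 0}, generated by subtracting positive coroots of type B_m-dual (the vectors e_i − e_j, e_i + e_j for i < j, and e_i), let λ_s = (1^{(s)}, 0^{(m−s)}). Then the set of elements of C̄ which are ≤ λ_s equals {λ_s, λ_{s−1}, λ_{s−2}, ..., λ₁, λ₀ = 0}. -/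
open Finset

private lemma card_filter_lt_fin (m t : ℕ) (ht : t ≤ m) :
    ((univ : Finset (Fin m)).filter fun i : Fin m => (i : ℕ) < t).card = t := by
  have himg : ((univ : Finset (Fin m)).filter fun i : Fin m => (i : ℕ) < t).image Fin.val
      = Finset.range t := by
    ext n
    simp only [mem_image, mem_filter, mem_univ, true_and, Finset.mem_range]
    constructor
    · rintro ⟨i, hi, rfl⟩; exact hi
    · intro hn; exact ⟨⟨n, lt_of_lt_of_le hn ht⟩, hn, rfl⟩
  calc ((univ : Finset (Fin m)).filter fun i : Fin m => (i : ℕ) < t).card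
      = (((univ : Finset (Fin m)).filter fun i : Fin m => (i : ℕ) < t).image Fin.val).card :=
        (Finset.card_image_of_injective _ Fin.val_injective).symm
    _ = t := by rw [himg, Finset.card_range]

/-- The positive coroots appearing for `GU_{2m+1}` (§2.4.2):
`e_i − e_j`, `e_i + e_j` for `i < j`, and `e_i`. -/
def posCorootsB (m : ℕ) : Set (Fin m → ℤ) :=
  {v | ∃ i j : Fin m, i < j ∧
      (v = Pi.single i 1 - Pi.single j 1 ∨ v = Pi.single i 1 + Pi.single j 1)} ∪
  {v | ∃ i : Fin m, v = Pi.single i 1}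

private lemma psum_nonneg (m : ℕ) (v : Fin m → ℤ)
    (hv : v ∈ AddSubmonoid.closure (posCorootsB m)) (k : ℕ) :
    0 ≤ ∑ i ∈ (univ : Finset (Fin m)).filter (fun i : Fin m => (i : ℕ) < k), v i := by
  induction hv using AddSubmonoid.closure_induction with
  | mem x hx =>
      have key : ∀ a : Fin m, ∑ i ∈ (univ : Finset (Fin m)).filter (fun i : Fin m => (i : ℕ) < k),
          Pi.single a (1:ℤ) i = if a ∈ (univ : Finset (Fin m)).filter (fun i : Fin m => (i : ℕ) < k)
            then 1 else 0 := fun a => Finset.sum_pi_single' a 1 _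
      rcases hx with ⟨i, j, hij, h | h⟩ | ⟨i, h⟩
      · subst h
        simp only [Pi.sub_apply, Finset.sum_sub_distrib, key, mem_filter, mem_univ, true_and]
        have : (j : ℕ) < k → (i : ℕ) < k := fun h => lt_trans (Fin.lt_iff_val_lt_val.mp hij) h
        split_ifs <;> omega
      · subst h
        simp only [Pi.add_apply, Finset.sum_add_distrib, key, mem_filter, mem_univ, true_and]
        split_ifs <;> omega
      · subst h
        rw [key]
        split_ifs <;> omega
  | zero => simp
  | add x y _ _ hx hy =>
      simp only [Pi.add_apply]
      rw [Finset.sum_add_distrib]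
      exact add_nonneg hx hy

private lemma psum_lam (m t : ℕ) (ht : t ≤ m) (k : ℕ) :
    ∑ i ∈ (univ : Finset (Fin m)).filter (fun i : Fin m => (i : ℕ) < k), lamVec m t i
      = (min k t : ℤ) := by
  have h1 : ∑ i ∈ (univ : Finset (Fin m)).filter (fun i : Fin m => (i : ℕ) < k), lamVec m t i
      = ∑ i ∈ (univ : Finset (Fin m)).filter (fun i : Fin m => (i : ℕ) < k),
          (if (i : ℕ) < t then (1:ℤ) else 0) := rfl
  rw [h1, Finset.sum_boole]
  rw [Finset.filter_filter]
  have h2 : ((univ : Finset (Fin m)).filter fun i : Fin m => (i : ℕ) < k ∧ (i : ℕ) < t)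
      = (univ : Finset (Fin m)).filter fun i : Fin m => (i : ℕ) < min k t := by
    apply Finset.filter_congr
    intro i _
    omega
  rw [h2, card_filter_lt_fin m (min k t) (le_trans (min_le_right k t) ht)]
  push_cast
  rfl

/-- in the dominance order on the dominant cone of `ℤ^m` given by the
positive coroots `e_i − e_j`, `e_i + e_j` (`i < j`) and `e_i`, the elements below
`λ_s` are exactly `λ_s > λ_{s−1} > ⋯ > λ₁ > λ₀ = 0`.
(This computes `Adm₀(μ_{r,s})` for `GU_{2m+1}`.) -/
theorem stmt_16 (m s : ℕ) (hs : s ≤ m) (μ : Fin m → ℤ) (hμ : isDominant m μ) :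
    lamVec m s - μ ∈ AddSubmonoid.closure (posCorootsB m) ↔
      ∃ j ≤ s, μ = lamVec m j := by
  constructor
  · intro hmem
    have hP : ∀ k : ℕ, ∑ i ∈ (univ : Finset (Fin m)).filter (fun i : Fin m => (i : ℕ) < k), μ i
        ≤ (min k s : ℤ) := by
      intro k
      have h0 := psum_nonneg m _ hmem k
      rw [show (fun i => (lamVec m s - μ) i) = fun i => lamVec m s i - μ i from rfl] at h0
      rw [Finset.sum_sub_distrib, psum_lam m s hs k] at h0
      omega
    -- every entry of μ is at most 1
    have h1 : ∀ i : Fin m, μ i ≤ 1 := by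
      intro i
      have hpos : 0 < m := i.pos
      have hle : μ i ≤ μ ⟨0, hpos⟩ := hμ.1 ⟨0, hpos⟩ i (by simp [Fin.le_def])
      have hfil : ((univ : Finset (Fin m)).filter fun i : Fin m => (i : ℕ) < 1) = {⟨0, hpos⟩} := by
        ext x
        simp only [mem_filter, mem_univ, true_and, Finset.mem_singleton]
        constructor
        · intro hx
          apply Fin.ext
          show (x : ℕ) = 0
          omega
        · rintro rfl; simp
      have h5 := hP 1
      rw [hfil, Finset.sum_singleton] at h5
      have h6 := le_trans h5 (min_le_left _ _)
      norm_num at h6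
      exact le_trans hle h6
    have hval : ∀ i : Fin m, μ i = 0 ∨ μ i = 1 := by
      intro i
      have := hμ.2 i
      have := h1 i
      omega
    set T : Finset (Fin m) := (univ : Finset (Fin m)).filter (fun i => μ i = 1) with hT
    set j : ℕ := T.card with hj
    have hjm : j ≤ m := by
      have := Finset.card_le_univ T
      simpa using this
    have hiff : ∀ i : Fin m, μ i = 1 ↔ (i : ℕ) < j := by
      intro i
      constructor
      · intro hi
        have hsub : Finset.Iic i ⊆ T := by
          intro i' hi'
          rw [hT, mem_filter]
          refine ⟨mem_univ _, ?_⟩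
          have h2 := hμ.1 i' i (Finset.mem_Iic.mp hi')
          have := h1 i'
          omega
        have := Finset.card_le_card hsub
        rw [Fin.card_Iic] at this
        omega
      · intro hi
        by_contra hne
        have hzero : μ i = 0 := (hval i).resolve_right hne
        have hsub : T ⊆ Finset.Iio i := by
          intro i' hi'
          rw [hT, mem_filter] at hi'
          rw [Finset.mem_Iio]
          by_contra hlt
          push_neg at hlt
          have := hμ.1 i i' hlt
          omega
        have := Finset.card_le_card hsub
        rw [Fin.card_Iio] at this
        omega
    have hjs : j ≤ s := by
      have hone : ∀ i ∈ (univ : Finset (Fin m)).filter (fun i : Fin m => (i : ℕ) < j),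
          μ i = (1:ℤ) := by
        intro i hi
        rw [mem_filter] at hi
        exact (hiff i).mpr hi.2
      have hsum : ∑ i ∈ (univ : Finset (Fin m)).filter (fun i : Fin m => (i : ℕ) < j), μ i
          = (j : ℤ) := by
        rw [Finset.sum_congr rfl hone, Finset.sum_const, card_filter_lt_fin m j hjm]
        simp
      have := hP j
      rw [hsum] at this
      have : (j : ℤ) ≤ (min j s : ℤ) := this
      have hnat : j ≤ min j s := by exact_mod_cast this
      omega
    refine ⟨j, hjs, funext fun i => ?_⟩
    show μ i = if (i : ℕ) < j then 1 else 0
    split_ifs with h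
    · exact (hiff i).mpr h
    · exact (hval i).resolve_right (fun hc => h ((hiff i).mp hc))
  · rintro ⟨j, hj, rfl⟩
    have hrepr : lamVec m s - lamVec m j
        = ∑ i ∈ (univ : Finset (Fin m)).filter (fun i : Fin m => j ≤ (i : ℕ) ∧ (i : ℕ) < s),
            Pi.single i (1:ℤ) := by
      funext x
      rw [Finset.sum_apply]
      rw [Finset.sum_pi_single]
      simp only [Pi.sub_apply, lamVec, mem_filter, mem_univ, true_and]
      split_ifs <;> omega
    rw [hrepr]
    exact AddSubmonoid.sum_mem _ (fun i _ =>
      AddSubmonoid.subset_closure (Or.inr ⟨i, rfl⟩))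
end
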